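/- arXiv:2404.03273 — 5 statements merged into one kernel-verified Lean document; each statement's English description precedes it below -/
import Mathlib

section
/- Let σ > 0 and p ≥ 1. If the base divergence D : P(ℝ) × P(ℝ) → [0,∞) satisfies the triangle inequality on P(ℝ) (D(η,ζ) ≤ D(η,ξ) + D(ξ,ζ) for all η, ξ, ζ ∈ P(ℝ)), then GSSD_σ := (GSSD_σ^p)^{1/p} satisfies the triangle inequality on P_p(ℝ^d): for all μ, ν, ρ ∈ P_p(ℝ^d), GSSD_σ(μ,ν) ≤ GSSD_σ(μ,ρ) + GSSD_σ(ρ,ν). -/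
open MeasureTheory ProbabilityTheory Metric Filter
open scoped ENNReal NNReal

noncomputable section

/-- Euclidean space ℝ^d. -/
abbrev Ed (d : ℕ) := EuclideanSpace ℝ (Fin d)

/-- The unit sphere S^{d-1} in ℝ^d. -/
abbrev Sph (d : ℕ) := Metric.sphere (0 : Ed d) 1

/-- The uniform probability measure u_d on the unit sphere S^{d-1}:
the normalized surface (cone) measure. -/
def ud (d : ℕ) : Measure (Sph d) :=
  ((volume : Measure (Ed d)).toSphere Set.univ)⁻¹ • (volume : Measure (Ed d)).toSphere

/-- Convolution of two measures on ℝ. -/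
def convR (η ζ : Measure ℝ) : Measure ℝ := (η.prod ζ).map (fun p => p.1 + p.2)

/-- The centered Gaussian measure N_σ on ℝ with variance σ² (Dirac mass at 0 if σ = 0). -/
def gaussR (σ : ℝ) : Measure ℝ := gaussianReal 0 (σ.toNNReal ^ 2)

instance (σ : ℝ) : IsProbabilityMeasure (gaussR σ) := by
  unfold gaussR; infer_instance

/-- The Radon projection R_u μ : pushforward of μ under x ↦ ⟨u, x⟩. -/
def radonProj {d : ℕ} (u : Sph d) (μ : Measure (Ed d)) : Measure ℝ :=
  μ.map (fun x => (inner ℝ (u : Ed d) x : ℝ))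

/-- The Gaussian-smoothed Radon projection R_u μ * N_σ. -/
def smProj {d : ℕ} (σ : ℝ) (u : Sph d) (μ : Measure (Ed d)) : Measure ℝ :=
  convR (radonProj u μ) (gaussR σ)

/-- Finite p-th moment for a measure on ℝ^d. -/
def FiniteMomentP {d : ℕ} (p : ℝ) (μ : Measure (Ed d)) : Prop :=
  ∫⁻ x, ENNReal.ofReal (‖x‖ ^ p) ∂μ < ⊤

/-- The σ-Gaussian-smoothed p-sliced divergence associated to a base divergence D. -/
def GSSD {d : ℕ} (D : Measure ℝ → Measure ℝ → ℝ) (p σ : ℝ)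
    (μ ν : Measure (Ed d)) : ℝ :=
  ∫ u, (D (smProj σ u μ) (smProj σ u ν)) ^ p ∂(ud d)

lemma smProj_prob {d : ℕ} (σ : ℝ) (u : Sph d) (μ : Measure (Ed d))
    [IsProbabilityMeasure μ] : IsProbabilityMeasure (smProj σ u μ) := by
  have h1 : IsProbabilityMeasure (radonProj u μ) := by
    unfold radonProj
    exact Measure.isProbabilityMeasure_map
      ((Continuous.measurable (continuous_const.inner continuous_id)).aemeasurable)
  unfold smProj convR
  exact Measure.isProbabilityMeasure_map (Measurable.aemeasurable (by fun_prop))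

/-- If the base divergence D (with values in [0,∞)) satisfies the triangle
inequality on probability measures on ℝ, then `GSSD_σ := (GSSD_σ^p)^{1/p}` satisfies the
triangle inequality on `P_p(ℝ^d)`. -/
theorem gssd_triangle
    (d : ℕ) (hd : 1 ≤ d) (σ p : ℝ) (hσ : 0 < σ) (hp : 1 ≤ p)
    (D : Measure ℝ → Measure ℝ → ℝ)
    (hD0 : ∀ η ζ : Measure ℝ, 0 ≤ D η ζ)
    (hint : ∀ μ ν : Measure (Ed d), IsProbabilityMeasure μ → IsProbabilityMeasure ν →
      MemLp (fun u : Sph d => D (smProj σ u μ) (smProj σ u ν)) (ENNReal.ofReal p) (ud d))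
    (htri : ∀ η ξ ζ : Measure ℝ, IsProbabilityMeasure η → IsProbabilityMeasure ξ →
      IsProbabilityMeasure ζ → D η ζ ≤ D η ξ + D ξ ζ) :
    ∀ μ ν ρ : Measure (Ed d), IsProbabilityMeasure μ → IsProbabilityMeasure ν →
      IsProbabilityMeasure ρ →
      FiniteMomentP p μ → FiniteMomentP p ν → FiniteMomentP p ρ →
      (GSSD D p σ μ ν) ^ (1 / p) ≤ (GSSD D p σ μ ρ) ^ (1 / p) + (GSSD D p σ ρ ν) ^ (1 / p) := by
  intro μ ν ρ hμ hν hρ _ _ _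
  set P : ℝ≥0∞ := ENNReal.ofReal p with hP
  have hp0 : (0:ℝ) < p := lt_of_lt_of_le one_pos hp
  have hP0 : P ≠ 0 := by simp [hP, ENNReal.ofReal_eq_zero, not_le, hp0]
  have hPtop : P ≠ ⊤ := ENNReal.ofReal_ne_top
  have hPtoReal : P.toReal = p := ENNReal.toReal_ofReal hp0.le
  have hP1 : (1:ℝ≥0∞) ≤ P := by
    rw [hP, ← ENNReal.ofReal_one]; exact ENNReal.ofReal_le_ofReal hp
  set f : Sph d → ℝ := fun u => D (smProj σ u μ) (smProj σ u ν) with hf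
  set g : Sph d → ℝ := fun u => D (smProj σ u μ) (smProj σ u ρ) with hg
  set h : Sph d → ℝ := fun u => D (smProj σ u ρ) (smProj σ u ν) with hh
  have hfm : MemLp f P (ud d) := hint μ ν hμ hν
  have hgm : MemLp g P (ud d) := hint μ ρ hμ hρ
  have hhm : MemLp h P (ud d) := hint ρ ν hρ hν
  have hptw : ∀ u, f u ≤ g u + h u := fun u =>
    htri _ _ _ (smProj_prob σ u μ) (smProj_prob σ u ρ) (smProj_prob σ u ν)
  -- express norms
  have key : ∀ (F : Sph d → ℝ), (∀ u, 0 ≤ F u) → MemLp F P (ud d) →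
      eLpNorm F P (ud d) = ENNReal.ofReal ((∫ u, F u ^ p ∂(ud d)) ^ (1/p)) := by
    intro F hF hFm
    rw [hFm.eLpNorm_eq_integral_rpow_norm hP0 hPtop]
    congr 1
    rw [hPtoReal, one_div]
    congr 1
    exact integral_congr_ae (Filter.Eventually.of_forall fun u => by
      simp only [Real.norm_of_nonneg (hF u)])
  have hGf : GSSD D p σ μ ν = ∫ u, f u ^ p ∂(ud d) := rfl
  have hGg : GSSD D p σ μ ρ = ∫ u, g u ^ p ∂(ud d) := rfl
  have hGh : GSSD D p σ ρ ν = ∫ u, h u ^ p ∂(ud d) := rfl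
  have hkf := key f (fun u => hD0 _ _) hfm
  have hkg := key g (fun u => hD0 _ _) hgm
  have hkh := key h (fun u => hD0 _ _) hhm
  have hnnf : (0:ℝ) ≤ (∫ u, f u ^ p ∂(ud d)) ^ (1/p) :=
    Real.rpow_nonneg (integral_nonneg fun u => Real.rpow_nonneg (hD0 _ _) _) _
  have hnng : (0:ℝ) ≤ (∫ u, g u ^ p ∂(ud d)) ^ (1/p) :=
    Real.rpow_nonneg (integral_nonneg fun u => Real.rpow_nonneg (hD0 _ _) _) _
  have hnnh : (0:ℝ) ≤ (∫ u, h u ^ p ∂(ud d)) ^ (1/p) :=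
    Real.rpow_nonneg (integral_nonneg fun u => Real.rpow_nonneg (hD0 _ _) _) _
  have htf : (eLpNorm f P (ud d)).toReal = (∫ u, f u ^ p ∂(ud d)) ^ (1/p) := by
    rw [hkf, ENNReal.toReal_ofReal hnnf]
  have htg : (eLpNorm g P (ud d)).toReal = (∫ u, g u ^ p ∂(ud d)) ^ (1/p) := by
    rw [hkg, ENNReal.toReal_ofReal hnng]
  have hth : (eLpNorm h P (ud d)).toReal = (∫ u, h u ^ p ∂(ud d)) ^ (1/p) := by
    rw [hkh, ENNReal.toReal_ofReal hnnh]
  rw [hGf, hGg, hGh, ← htf, ← htg, ← hth]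
  have h1 : eLpNorm f P (ud d) ≤ eLpNorm (fun u => g u + h u) P (ud d) :=
    eLpNorm_mono_real fun u => by
      rw [Real.norm_of_nonneg (hD0 _ _)]; exact hptw u
  have h2 : eLpNorm (fun u => g u + h u) P (ud d) ≤
      eLpNorm g P (ud d) + eLpNorm h P (ud d) :=
    eLpNorm_add_le hgm.1 hhm.1 hP1
  have h3 : eLpNorm f P (ud d) ≤ eLpNorm g P (ud d) + eLpNorm h P (ud d) := h1.trans h2
  have hfin : eLpNorm g P (ud d) + eLpNorm h P (ud d) ≠ ⊤ :=
    ENNReal.add_ne_top.mpr ⟨hgm.2.ne, hhm.2.ne⟩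
  calc (eLpNorm f P (ud d)).toReal
      ≤ (eLpNorm g P (ud d) + eLpNorm h P (ud d)).toReal :=
        ENNReal.toReal_le_toReal hfm.2.ne hfin |>.mpr h3
    _ = (eLpNorm g P (ud d)).toReal + (eLpNorm h P (ud d)).toReal :=
        ENNReal.toReal_add hgm.2.ne hhm.2.ne
end
end

section
/- Let p ≥ 1, μ, ν ∈ P_p(ℝ^d), and 0 ≤ σ₁ ≤ σ₂ be two noise levels. Then GSSW_{σ₁}^p(μ,ν) ≤ 2^{p−1} · GSSW_{σ₂}^p(μ,ν) + 2^{2p−1} · E[|Z|^p], where Z ~ N(0, σ₂² − σ₁²) is a centered Gaussian random variable with variance σ₂² − σ₁². -/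
open MeasureTheory ProbabilityTheory Metric Filter
open scoped ENNReal NNReal

noncomputable section

/-- `W_p(η,ζ)^p`: the p-th power of the p-Wasserstein distance, as the infimum over
couplings γ of η and ζ of `∫ |x−y|^p dγ`. -/
def WpPow (p : ℝ) (η ζ : Measure ℝ) : ℝ≥0∞ :=
  ⨅ (γ : Measure (ℝ × ℝ)) (_ : γ.map Prod.fst = η ∧ γ.map Prod.snd = ζ),
    ∫⁻ q, ENNReal.ofReal (|q.1 - q.2| ^ p) ∂γ

/-- The σ-Gaussian-smoothed p-sliced Wasserstein distance (to the power p):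
`GSSW_σ^p(μ,ν) = ∫_{S^{d-1}} W_p(R_u μ * N_σ, R_u ν * N_σ)^p du_d(u)`. -/
def GSSWpow {d : ℕ} (p σ : ℝ) (μ ν : Measure (Ed d)) : ℝ≥0∞ :=
  ∫⁻ u, WpPow p (smProj σ u μ) (smProj σ u ν) ∂(ud d)


open Set Real
open scoped ProbabilityTheory

lemma isProbabilityMeasure_convR (η ζ : Measure ℝ) [IsProbabilityMeasure η]
    [IsProbabilityMeasure ζ] : IsProbabilityMeasure (convR η ζ) := by
  unfold convR; exact Measure.isProbabilityMeasure_map measurable_add.aemeasurable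

lemma convR_apply (η ζ : Measure ℝ) [SFinite η] [SFinite ζ] {s : Set ℝ}
    (hs : MeasurableSet s) :
    convR η ζ s = ∫⁻ x, ∫⁻ y, s.indicator 1 (x + y) ∂ζ ∂η := by
  rw [convR, Measure.map_apply measurable_add hs,
    Measure.prod_apply (measurable_add hs)]
  congr 1; funext x
  show ζ {y | x + y ∈ s} = _
  rw [← lintegral_indicator_one (s := {y | x + y ∈ s}) ((measurable_const_add x) hs)]
  congr 1

lemma convR_assoc (η ζ ξ : Measure ℝ) [IsProbabilityMeasure η] [IsProbabilityMeasure ζ]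
    [IsProbabilityMeasure ξ] : convR (convR η ζ) ξ = convR η (convR ζ ξ) := by
  haveI := isProbabilityMeasure_convR η ζ
  haveI := isProbabilityMeasure_convR ζ ξ
  ext s hs
  have hind : Measurable (s.indicator (1 : ℝ → ℝ≥0∞)) := measurable_one.indicator hs
  rw [convR_apply _ _ hs, convR_apply _ _ hs]
  have m1 : Measurable fun a : ℝ => ∫⁻ c, s.indicator 1 (a + c) ∂ξ :=
    (hind.comp measurable_add).lintegral_prod_right'
  rw [show convR η ζ = (η.prod ζ).map (fun p => p.1 + p.2) from rfl,
    lintegral_map m1 measurable_add]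
  rw [lintegral_prod (fun z : ℝ × ℝ => ∫⁻ c, s.indicator 1 (z.1 + z.2 + c) ∂ξ)
    ((m1.comp measurable_add).aemeasurable)]
  congr 1; funext x
  rw [show convR ζ ξ = (ζ.prod ξ).map (fun p => p.1 + p.2) from rfl,
    lintegral_map (show Measurable fun y : ℝ => s.indicator (1 : ℝ → ℝ≥0∞) (x + y)
      from hind.comp (measurable_const_add x)) measurable_add]
  rw [lintegral_prod (fun z : ℝ × ℝ => s.indicator 1 (x + (z.1 + z.2)))
    (((hind.comp (measurable_const_add x)).comp measurable_add).aemeasurable)]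
  simp_rw [add_assoc]

open Real

lemma gpdf_mul (v w : ℝ≥0) (hv : v ≠ 0) (hw : w ≠ 0) (x y : ℝ) :
    gaussianPDFReal 0 v x * gaussianPDFReal 0 w (y - x)
      = gaussianPDFReal 0 (v + w) y
          * gaussianPDFReal ((v : ℝ) * y / ((v : ℝ) + (w : ℝ))) (v * w / (v + w)) x := by
  have ha : (0:ℝ) < v := NNReal.coe_pos.mpr (pos_iff_ne_zero.mpr hv)
  have hb : (0:ℝ) < w := NNReal.coe_pos.mpr (pos_iff_ne_zero.mpr hw)
  have hab : (0:ℝ) < (v:ℝ) + w := by linarith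
  have hc : ((v * w / (v + w) : ℝ≥0) : ℝ) = (v:ℝ) * w / ((v:ℝ) + w) := by push_cast; ring
  simp only [gaussianPDFReal, sub_zero, NNReal.coe_add, hc]
  rw [mul_mul_mul_comm, mul_mul_mul_comm ((√(2 * π * ((v:ℝ) + w)))⁻¹), ← Real.exp_add,
    ← Real.exp_add, ← mul_inv, ← mul_inv, ← Real.sqrt_mul (by positivity),
    ← Real.sqrt_mul (by positivity)]
  congr 2
  · field_simp
  · field_simp
    ring

lemma lintegral_gpdf_conv (v w : ℝ≥0) (hv : v ≠ 0) (hw : w ≠ 0) (y : ℝ) :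
    ∫⁻ x, gaussianPDF 0 v x * gaussianPDF 0 w (y - x) = gaussianPDF 0 (v + w) y := by
  have hvw : v + w ≠ 0 := by simp [add_eq_zero, hv]
  have hc : v * w / (v + w) ≠ 0 := by
    simp [div_eq_zero_iff, mul_eq_zero, hv, hw, hvw]
  simp_rw [gaussianPDF,
    ← ENNReal.ofReal_mul (gaussianPDFReal_nonneg 0 v _),
    gpdf_mul v w hv hw,
    ENNReal.ofReal_mul (gaussianPDFReal_nonneg 0 (v + w) y)]
  have hm : Measurable fun x : ℝ =>
      ENNReal.ofReal (gaussianPDFReal ((v:ℝ) * y / ((v:ℝ) + (w:ℝ))) (v * w / (v + w)) x) :=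
    measurable_gaussianPDF _ _
  have h1 : ∫⁻ x, ENNReal.ofReal
      (gaussianPDFReal ((v:ℝ) * y / ((v:ℝ) + (w:ℝ))) (v * w / (v + w)) x) = 1 :=
    lintegral_gaussianPDF_eq_one _ hc
  rw [lintegral_const_mul _ hm, h1, mul_one]


lemma convR_withDensity (f g : ℝ → ℝ≥0∞) (hf : Measurable f) (hg : Measurable g) :
    convR (volume.withDensity f) (volume.withDensity g)
      = volume.withDensity (fun y => ∫⁻ x, f x * g (y - x)) := by
  ext s hs
  have hind : Measurable (s.indicator (1 : ℝ → ℝ≥0∞)) := measurable_one.indicator hs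
  have m2 : ∀ x : ℝ, Measurable fun y => s.indicator (1 : ℝ → ℝ≥0∞) (x + y) :=
    fun x => hind.comp (measurable_const_add x)
  rw [convR_apply _ _ hs, withDensity_apply _ hs]
  have step1 : ∀ x : ℝ, ∫⁻ y, s.indicator 1 (x + y) ∂(volume.withDensity g)
      = ∫⁻ y, g (y - x) * s.indicator 1 y ∂volume := by
    intro x
    rw [lintegral_withDensity_eq_lintegral_mul _ hg (m2 x)]
    have hfun : (g * fun y => s.indicator (1 : ℝ → ℝ≥0∞) (x + y))
        = fun y => (fun z => g (z - x) * s.indicator 1 z) (y + x) := by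
      funext y
      simp [Pi.mul_apply, add_sub_cancel_right, add_comm x y]
    rw [hfun, lintegral_add_right_eq_self]
  have mswap : Measurable fun q : ℝ × ℝ =>
      f q.1 * (g (q.2 - q.1) * s.indicator 1 q.2) :=
    (hf.comp measurable_fst).mul
      ((hg.comp (measurable_snd.sub measurable_fst)).mul (hind.comp measurable_snd))
  rw [lintegral_withDensity_eq_lintegral_mul _ hf
    (show Measurable fun x : ℝ => ∫⁻ y, s.indicator (1 : ℝ → ℝ≥0∞) (x + y)
        ∂(volume.withDensity g)
      from (hind.comp measurable_add).lintegral_prod_right')]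
  calc ∫⁻ x, (f * (fun x => ∫⁻ y, s.indicator 1 (x + y) ∂(volume.withDensity g))) x ∂volume
      = ∫⁻ x, ∫⁻ y, f x * (g (y - x) * s.indicator 1 y) ∂volume ∂volume := by
        congr 1; funext x
        simp only [Pi.mul_apply, step1 x]
        rw [lintegral_const_mul _ (show Measurable fun y : ℝ =>
          g (y - x) * s.indicator (1 : ℝ → ℝ≥0∞) y
          from (hg.comp (measurable_sub_const x)).mul hind)]
    _ = ∫⁻ y, ∫⁻ x, f x * (g (y - x) * s.indicator 1 y) ∂volume ∂volume :=
        lintegral_lintegral_swap mswap.aemeasurable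
    _ = ∫⁻ y, s.indicator (fun y => ∫⁻ x, f x * g (y - x) ∂volume) y ∂volume := by
        congr 1; funext y
        by_cases h : y ∈ s
        · simp only [Set.indicator_of_mem h, Pi.one_apply, mul_one]
        · simp [Set.indicator_of_notMem h]
    _ = ∫⁻ y in s, ∫⁻ x, f x * g (y - x) ∂volume ∂volume := by
        rw [lintegral_indicator hs]

lemma convR_gaussianReal (v w : ℝ≥0) :
    convR (gaussianReal 0 v) (gaussianReal 0 w) = gaussianReal 0 (v + w) := by
  rcases eq_or_ne v 0 with rfl | hv
  · rw [zero_add, gaussianReal_zero_var, convR, Measure.dirac_prod,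
      Measure.map_map measurable_add measurable_prodMk_left]
    simp [Function.comp_def]
  rcases eq_or_ne w 0 with rfl | hw
  · rw [add_zero, gaussianReal_zero_var, convR, Measure.prod_dirac,
      Measure.map_map measurable_add (show Measurable fun x : ℝ => (x, (0 : ℝ))
        from measurable_id.prodMk measurable_const)]
    simp [Function.comp_def]
  have hvw : v + w ≠ 0 := by simp [add_eq_zero, hv]
  rw [gaussianReal_of_var_ne_zero _ hv, gaussianReal_of_var_ne_zero _ hw,
    gaussianReal_of_var_ne_zero _ hvw,
    convR_withDensity _ _ (measurable_gaussianPDF _ _) (measurable_gaussianPDF _ _)]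
  congr 1
  funext y
  exact lintegral_gpdf_conv v w hv hw y

lemma meas_cost {α : Type*} [MeasurableSpace α] (p : ℝ) {u v : α → ℝ}
    (hu : Measurable u) (hv : Measurable v) (hp : 0 ≤ p) :
    Measurable fun a => ENNReal.ofReal (|u a - v a| ^ p) :=
  ENNReal.measurable_ofReal.comp
    ((((Real.continuous_rpow_const hp).comp continuous_abs).measurable).comp (hu.sub hv))

lemma pointwise_bound {p : ℝ} (hp : 1 ≤ p) (s t x y : ℝ) :
    ENNReal.ofReal (|x - y| ^ p)
      ≤ (2 : ℝ≥0∞) ^ (p - 1) * ENNReal.ofReal (|s - t| ^ p)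
        + (2 : ℝ≥0∞) ^ (2 * p - 2)
            * (ENNReal.ofReal (|x - s| ^ p) + ENNReal.ofReal (|t - y| ^ p)) := by
  have hp0 : 0 ≤ p := zero_le_one.trans hp
  have key : ∀ r : ℝ, ENNReal.ofReal (|r| ^ p) = ENNReal.ofReal |r| ^ p := fun r =>
    (ENNReal.ofReal_rpow_of_nonneg (abs_nonneg r) hp0).symm
  simp only [key]
  set C := ENNReal.ofReal |s - t|
  set D1 := ENNReal.ofReal |x - s|
  set D2 := ENNReal.ofReal |t - y|
  have h1 : ENNReal.ofReal |x - y| ≤ C + (D1 + D2) := by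
    have habs : |x - y| ≤ |s - t| + (|x - s| + |t - y|) := by
      have h2 := abs_add_le (x - s) (s - t)
      have h3 := abs_add_le ((x - s) + (s - t)) (t - y)
      have h4 : x - y = ((x - s) + (s - t)) + (t - y) := by ring
      rw [h4]; linarith
    calc ENNReal.ofReal |x - y| ≤ ENNReal.ofReal (|s - t| + (|x - s| + |t - y|)) :=
          ENNReal.ofReal_le_ofReal habs
      _ ≤ C + (D1 + D2) :=
          le_trans ENNReal.ofReal_add_le (add_le_add le_rfl ENNReal.ofReal_add_le)
  calc ENNReal.ofReal |x - y| ^ p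
      ≤ (C + (D1 + D2)) ^ p := ENNReal.rpow_le_rpow h1 hp0
    _ ≤ 2 ^ (p - 1) * (C ^ p + (D1 + D2) ^ p) :=
        ENNReal.rpow_add_le_mul_rpow_add_rpow _ _ hp
    _ ≤ 2 ^ (p - 1) * (C ^ p + 2 ^ (p - 1) * (D1 ^ p + D2 ^ p)) := by
        exact mul_le_mul_right
          (add_le_add le_rfl (ENNReal.rpow_add_le_mul_rpow_add_rpow _ _ hp)) _
    _ = 2 ^ (p - 1) * C ^ p + (2 : ℝ≥0∞) ^ (2 * p - 2) * (D1 ^ p + D2 ^ p) := by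
        rw [mul_add, ← mul_assoc, ← ENNReal.rpow_add _ _ two_ne_zero ENNReal.ofNat_ne_top,
          show p - 1 + (p - 1) = 2 * p - 2 by ring]

set_option maxHeartbeats 2000000 in
lemma wpPow_le_of_coupling (p : ℝ) (hp : 1 ≤ p) (A B ξ : Measure ℝ)
    [IsProbabilityMeasure A] [IsProbabilityMeasure B] [IsProbabilityMeasure ξ]
    (γ : Measure (ℝ × ℝ)) (hγ1 : γ.map Prod.fst = convR A ξ)
    (hγ2 : γ.map Prod.snd = convR B ξ) :
    WpPow p A B
      ≤ (2 : ℝ≥0∞) ^ (p - 1) * ∫⁻ q, ENNReal.ofReal (|q.1 - q.2| ^ p) ∂γ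
        + (2 : ℝ≥0∞) ^ (2 * p - 1) * ∫⁻ t, ENNReal.ofReal (|t| ^ p) ∂ξ := by
  have hp0 : 0 ≤ p := zero_le_one.trans hp
  haveI := isProbabilityMeasure_convR A ξ
  haveI := isProbabilityMeasure_convR B ξ
  haveI : IsProbabilityMeasure γ := by
    constructor
    have h := congrArg (fun m : Measure ℝ => m univ) hγ1
    simpa [Measure.map_apply measurable_fst MeasurableSet.univ] using h
  -- the joint laws (S, X) with S = X + Z
  set T : ℝ × ℝ → ℝ × ℝ := fun q => (q.1 + q.2, q.1) with hT
  have hTm : Measurable T := measurable_add.prodMk measurable_fst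
  set ρA : Measure (ℝ × ℝ) := (A.prod ξ).map T with hρA
  set ρB : Measure (ℝ × ℝ) := (B.prod ξ).map T with hρB
  haveI : IsProbabilityMeasure ρA := Measure.isProbabilityMeasure_map hTm.aemeasurable
  haveI : IsProbabilityMeasure ρB := Measure.isProbabilityMeasure_map hTm.aemeasurable
  have hρA_fst : ρA.fst = convR A ξ := by
    rw [hρA, Measure.fst, Measure.map_map measurable_fst hTm]; rfl
  have hρB_fst : ρB.fst = convR B ξ := by
    rw [hρB, Measure.fst, Measure.map_map measurable_fst hTm]; rfl
  have hρA_snd : ρA.snd = A := by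
    rw [hρA, Measure.snd, Measure.map_map measurable_snd hTm]
    exact Measure.fst_prod
  have hρB_snd : ρB.snd = B := by
    rw [hρB, Measure.snd, Measure.map_map measurable_snd hTm]
    exact Measure.fst_prod
  -- glued kernel and measure
  set κ : Kernel (ℝ × ℝ) (ℝ × ℝ) :=
    (Kernel.comap ρA.condKernel Prod.fst measurable_fst) ×ₖ
      (Kernel.comap ρB.condKernel Prod.snd measurable_snd) with hκ
  haveI : IsMarkovKernel κ := by rw [hκ]; infer_instance
  set Θ : Measure ((ℝ × ℝ) × ℝ × ℝ) := γ.compProd κ with hΘ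
  -- marginals of the glued coupling
  have m21 : Measurable fun q : (ℝ × ℝ) × ℝ × ℝ => q.2.1 :=
    measurable_fst.comp measurable_snd
  have m22 : Measurable fun q : (ℝ × ℝ) × ℝ × ℝ => q.2.2 :=
    measurable_snd.comp measurable_snd
  have hmarg1 : Θ.map (fun q : (ℝ × ℝ) × ℝ × ℝ => q.2.1) = A := by
    ext E hE
    rw [Measure.map_apply m21 hE, hΘ, Measure.compProd_apply (m21 hE)]
    have h1 : ∀ st : ℝ × ℝ,
        κ st (Prod.mk st ⁻¹' ((fun q : (ℝ × ℝ) × ℝ × ℝ => q.2.1) ⁻¹' E))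
          = ρA.condKernel st.1 E := by
      intro st
      have hset : (Prod.mk st ⁻¹' ((fun q : (ℝ × ℝ) × ℝ × ℝ => q.2.1) ⁻¹' E))
          = E ×ˢ univ := by ext xy; simp
      rw [hset, hκ, Kernel.prod_apply, Measure.prod_prod, measure_univ, mul_one,
        Kernel.comap_apply]
    simp_rw [h1]
    have e1 : ∫⁻ s, ρA.condKernel s E ∂(γ.map Prod.fst)
        = ∫⁻ st : ℝ × ℝ, ρA.condKernel st.1 E ∂γ :=
      lintegral_map (Kernel.measurable_coe _ hE) measurable_fst
    rw [← e1, hγ1, ← hρA_fst]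
    have e2 : (ρA.fst ⊗ₘ ρA.condKernel) (univ ×ˢ E) = ∫⁻ s, ρA.condKernel s E ∂ρA.fst := by
      rw [Measure.compProd_apply (MeasurableSet.univ.prod hE)]
      apply lintegral_congr; intro s
      congr 1; ext y; simp
    rw [← e2, ρA.disintegrate ρA.condKernel]
    rw [show ρA (univ ×ˢ E) = ρA.snd E from by
        rw [Measure.snd_apply hE]; congr 1; ext q; simp, hρA_snd]
  have hmarg2 : Θ.map (fun q : (ℝ × ℝ) × ℝ × ℝ => q.2.2) = B := by
    ext E hE
    rw [Measure.map_apply m22 hE, hΘ, Measure.compProd_apply (m22 hE)]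
    have h1 : ∀ st : ℝ × ℝ,
        κ st (Prod.mk st ⁻¹' ((fun q : (ℝ × ℝ) × ℝ × ℝ => q.2.2) ⁻¹' E))
          = ρB.condKernel st.2 E := by
      intro st
      have hset : (Prod.mk st ⁻¹' ((fun q : (ℝ × ℝ) × ℝ × ℝ => q.2.2) ⁻¹' E))
          = univ ×ˢ E := by ext xy; simp
      rw [hset, hκ, Kernel.prod_apply, Measure.prod_prod, measure_univ, one_mul,
        Kernel.comap_apply]
    simp_rw [h1]
    have e1 : ∫⁻ t, ρB.condKernel t E ∂(γ.map Prod.snd)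
        = ∫⁻ st : ℝ × ℝ, ρB.condKernel st.2 E ∂γ :=
      lintegral_map (Kernel.measurable_coe _ hE) measurable_snd
    rw [← e1, hγ2, ← hρB_fst]
    have e2 : (ρB.fst ⊗ₘ ρB.condKernel) (univ ×ˢ E) = ∫⁻ s, ρB.condKernel s E ∂ρB.fst := by
      rw [Measure.compProd_apply (MeasurableSet.univ.prod hE)]
      apply lintegral_congr; intro s
      congr 1; ext y; simp
    rw [← e2, ρB.disintegrate ρB.condKernel]
    rw [show ρB (univ ×ˢ E) = ρB.snd E from by
        rw [Measure.snd_apply hE]; congr 1; ext q; simp, hρB_snd]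
  -- measurable cost functions
  have hMt : Measurable fun t : ℝ => ENNReal.ofReal (|t| ^ p) :=
    ENNReal.measurable_ofReal.comp
      (((Real.continuous_rpow_const hp0).comp continuous_abs).measurable)
  have mA1 : Measurable fun q : (ℝ × ℝ) × ℝ × ℝ => ENNReal.ofReal (|q.1.1 - q.1.2| ^ p) :=
    meas_cost p (measurable_fst.comp measurable_fst) (measurable_snd.comp measurable_fst) hp0
  have mA2 : Measurable fun q : (ℝ × ℝ) × ℝ × ℝ => ENNReal.ofReal (|q.2.1 - q.1.1| ^ p) :=
    meas_cost p m21 (measurable_fst.comp measurable_fst) hp0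
  have mA3 : Measurable fun q : (ℝ × ℝ) × ℝ × ℝ => ENNReal.ofReal (|q.1.2 - q.2.2| ^ p) :=
    meas_cost p (measurable_snd.comp measurable_fst) m22 hp0
  have hFA : Measurable fun sx : ℝ × ℝ => ENNReal.ofReal (|sx.2 - sx.1| ^ p) :=
    meas_cost p measurable_snd measurable_fst hp0
  have hFB : Measurable fun ty : ℝ × ℝ => ENNReal.ofReal (|ty.1 - ty.2| ^ p) :=
    meas_cost p measurable_fst measurable_snd hp0
  -- integral of a function of the first (ℝ × ℝ)-coordinate
  have hint1 : ∫⁻ q, ENNReal.ofReal (|q.1.1 - q.1.2| ^ p) ∂Θ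
      = ∫⁻ st : ℝ × ℝ, ENNReal.ofReal (|st.1 - st.2| ^ p) ∂γ := by
    have e0 : ∫⁻ q : (ℝ × ℝ) × ℝ × ℝ, ENNReal.ofReal (|q.1.1 - q.1.2| ^ p) ∂(γ ⊗ₘ κ)
        = ∫⁻ st, ∫⁻ _xy : ℝ × ℝ, ENNReal.ofReal (|st.1 - st.2| ^ p) ∂κ st ∂γ :=
      Measure.lintegral_compProd mA1
    rw [hΘ, e0]
    simp_rw [lintegral_const, measure_univ, mul_one]
  -- integral of the pair (S, X)
  have hintA : ∫⁻ q, ENNReal.ofReal (|q.2.1 - q.1.1| ^ p) ∂Θ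
      = ∫⁻ t, ENNReal.ofReal (|t| ^ p) ∂ξ := by
    have hG : Measurable fun s : ℝ => ∫⁻ x, ENNReal.ofReal (|x - s| ^ p) ∂ρA.condKernel s :=
      (show Measurable fun sx : ℝ × ℝ => ENNReal.ofReal (|sx.2 - sx.1| ^ p) from
        hFA).lintegral_kernel_prod_right'
    have e0 : ∫⁻ q : (ℝ × ℝ) × ℝ × ℝ, ENNReal.ofReal (|q.2.1 - q.1.1| ^ p) ∂(γ ⊗ₘ κ)
        = ∫⁻ st, ∫⁻ xy : ℝ × ℝ, ENNReal.ofReal (|xy.1 - st.1| ^ p) ∂κ st ∂γ :=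
      Measure.lintegral_compProd mA2
    have e1 : ∀ st : ℝ × ℝ, ∫⁻ xy : ℝ × ℝ, ENNReal.ofReal (|xy.1 - st.1| ^ p) ∂κ st
        = ∫⁻ x, ENNReal.ofReal (|x - st.1| ^ p) ∂ρA.condKernel st.1 := by
      intro st
      rw [hκ, Kernel.lintegral_prod _ _ _
        (meas_cost p measurable_fst measurable_const hp0)]
      simp_rw [lintegral_const, measure_univ, mul_one, Kernel.comap_apply]
    have e2 : ∫⁻ s, (∫⁻ x, ENNReal.ofReal (|x - s| ^ p) ∂ρA.condKernel s) ∂(γ.map Prod.fst)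
        = ∫⁻ st : ℝ × ℝ, ∫⁻ x, ENNReal.ofReal (|x - st.1| ^ p) ∂ρA.condKernel st.1 ∂γ :=
      lintegral_map hG measurable_fst
    have e3 : ∫⁻ sx : ℝ × ℝ, ENNReal.ofReal (|sx.2 - sx.1| ^ p) ∂(ρA.fst ⊗ₘ ρA.condKernel)
        = ∫⁻ s, ∫⁻ x, ENNReal.ofReal (|x - s| ^ p) ∂ρA.condKernel s ∂ρA.fst :=
      Measure.lintegral_compProd hFA
    have e4 : ∫⁻ sx : ℝ × ℝ, ENNReal.ofReal (|sx.2 - sx.1| ^ p) ∂ρA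
        = ∫⁻ q : ℝ × ℝ, ENNReal.ofReal (|q.1 - (q.1 + q.2)| ^ p) ∂(A.prod ξ) := by
      rw [hρA]; exact lintegral_map hFA hTm
    have e5 : ∫⁻ q : ℝ × ℝ, ENNReal.ofReal (|q.1 - (q.1 + q.2)| ^ p) ∂(A.prod ξ)
        = ∫⁻ q : ℝ × ℝ, ENNReal.ofReal (|q.2| ^ p) ∂(A.prod ξ) := by
      apply lintegral_congr; intro q
      rw [show q.1 - (q.1 + q.2) = -q.2 by ring, abs_neg]
    have e6 : ∫⁻ t, ENNReal.ofReal (|t| ^ p) ∂((A.prod ξ).map Prod.snd)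
        = ∫⁻ q : ℝ × ℝ, ENNReal.ofReal (|q.2| ^ p) ∂(A.prod ξ) :=
      lintegral_map hMt measurable_snd
    have e7 : (A.prod ξ).map Prod.snd = ξ := Measure.snd_prod
    rw [hΘ, e0]
    simp_rw [e1]
    rw [← e2, hγ1, ← hρA_fst, ← e3, ρA.disintegrate ρA.condKernel, e4, e5, ← e6, e7]
  -- integral of the pair (T, Y)
  have hintB : ∫⁻ q, ENNReal.ofReal (|q.1.2 - q.2.2| ^ p) ∂Θ
      = ∫⁻ t, ENNReal.ofReal (|t| ^ p) ∂ξ := by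
    have hG : Measurable fun t : ℝ => ∫⁻ y, ENNReal.ofReal (|t - y| ^ p) ∂ρB.condKernel t :=
      (show Measurable fun ty : ℝ × ℝ => ENNReal.ofReal (|ty.1 - ty.2| ^ p) from
        hFB).lintegral_kernel_prod_right'
    have e0 : ∫⁻ q : (ℝ × ℝ) × ℝ × ℝ, ENNReal.ofReal (|q.1.2 - q.2.2| ^ p) ∂(γ ⊗ₘ κ)
        = ∫⁻ st, ∫⁻ xy : ℝ × ℝ, ENNReal.ofReal (|st.2 - xy.2| ^ p) ∂κ st ∂γ :=
      Measure.lintegral_compProd mA3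
    have e1 : ∀ st : ℝ × ℝ, ∫⁻ xy : ℝ × ℝ, ENNReal.ofReal (|st.2 - xy.2| ^ p) ∂κ st
        = ∫⁻ y, ENNReal.ofReal (|st.2 - y| ^ p) ∂ρB.condKernel st.2 := by
      intro st
      rw [hκ, Kernel.lintegral_prod _ _ _
        (meas_cost p measurable_const measurable_snd hp0)]
      simp_rw [lintegral_const, measure_univ, mul_one, Kernel.comap_apply]
    have e2 : ∫⁻ t, (∫⁻ y, ENNReal.ofReal (|t - y| ^ p) ∂ρB.condKernel t) ∂(γ.map Prod.snd)
        = ∫⁻ st : ℝ × ℝ, ∫⁻ y, ENNReal.ofReal (|st.2 - y| ^ p) ∂ρB.condKernel st.2 ∂γ :=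
      lintegral_map hG measurable_snd
    have e3 : ∫⁻ ty : ℝ × ℝ, ENNReal.ofReal (|ty.1 - ty.2| ^ p) ∂(ρB.fst ⊗ₘ ρB.condKernel)
        = ∫⁻ t, ∫⁻ y, ENNReal.ofReal (|t - y| ^ p) ∂ρB.condKernel t ∂ρB.fst :=
      Measure.lintegral_compProd hFB
    have e4 : ∫⁻ ty : ℝ × ℝ, ENNReal.ofReal (|ty.1 - ty.2| ^ p) ∂ρB
        = ∫⁻ q : ℝ × ℝ, ENNReal.ofReal (|q.1 + q.2 - q.1| ^ p) ∂(B.prod ξ) := by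
      rw [hρB]; exact lintegral_map hFB hTm
    have e5 : ∫⁻ q : ℝ × ℝ, ENNReal.ofReal (|q.1 + q.2 - q.1| ^ p) ∂(B.prod ξ)
        = ∫⁻ q : ℝ × ℝ, ENNReal.ofReal (|q.2| ^ p) ∂(B.prod ξ) := by
      apply lintegral_congr; intro q
      rw [show q.1 + q.2 - q.1 = q.2 by ring]
    have e6 : ∫⁻ t, ENNReal.ofReal (|t| ^ p) ∂((B.prod ξ).map Prod.snd)
        = ∫⁻ q : ℝ × ℝ, ENNReal.ofReal (|q.2| ^ p) ∂(B.prod ξ) :=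
      lintegral_map hMt measurable_snd
    have e7 : (B.prod ξ).map Prod.snd = ξ := Measure.snd_prod
    rw [hΘ, e0]
    simp_rw [e1]
    rw [← e2, hγ2, ← hρB_fst, ← e3, ρB.disintegrate ρB.condKernel, e4, e5, ← e6, e7]
  -- the coupling of A and B
  have hπ : WpPow p A B ≤ ∫⁻ q, ENNReal.ofReal (|q.2.1 - q.2.2| ^ p) ∂Θ := by
    have ecost : ∫⁻ xy : ℝ × ℝ, ENNReal.ofReal (|xy.1 - xy.2| ^ p) ∂(Θ.map Prod.snd)
        = ∫⁻ q, ENNReal.ofReal (|q.2.1 - q.2.2| ^ p) ∂Θ :=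
      lintegral_map (meas_cost p measurable_fst measurable_snd hp0) measurable_snd
    rw [← ecost]
    refine iInf_le_of_le (Θ.map Prod.snd) (iInf_le_of_le ⟨?_, ?_⟩ le_rfl)
    · rw [Measure.map_map measurable_fst measurable_snd]; exact hmarg1
    · rw [Measure.map_map measurable_snd measurable_snd]; exact hmarg2
  refine hπ.trans ?_
  calc ∫⁻ q, ENNReal.ofReal (|q.2.1 - q.2.2| ^ p) ∂Θ
      ≤ ∫⁻ q, ((2 : ℝ≥0∞) ^ (p - 1) * ENNReal.ofReal (|q.1.1 - q.1.2| ^ p)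
          + (2 : ℝ≥0∞) ^ (2 * p - 2) * (ENNReal.ofReal (|q.2.1 - q.1.1| ^ p)
            + ENNReal.ofReal (|q.1.2 - q.2.2| ^ p))) ∂Θ :=
        lintegral_mono fun q => pointwise_bound hp q.1.1 q.1.2 q.2.1 q.2.2
    _ = (2 : ℝ≥0∞) ^ (p - 1) * ∫⁻ q, ENNReal.ofReal (|q.1.1 - q.1.2| ^ p) ∂Θ
        + (2 : ℝ≥0∞) ^ (2 * p - 2) * (∫⁻ q, ENNReal.ofReal (|q.2.1 - q.1.1| ^ p) ∂Θ
          + ∫⁻ q, ENNReal.ofReal (|q.1.2 - q.2.2| ^ p) ∂Θ) := by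
        rw [lintegral_add_left (mA1.const_mul _), lintegral_const_mul _ mA1,
          lintegral_const_mul _ (show Measurable fun q : (ℝ × ℝ) × ℝ × ℝ =>
            ENNReal.ofReal (|q.2.1 - q.1.1| ^ p) + ENNReal.ofReal (|q.1.2 - q.2.2| ^ p)
            from mA2.add mA3), lintegral_add_left mA2]
    _ = (2 : ℝ≥0∞) ^ (p - 1) * ∫⁻ q : ℝ × ℝ, ENNReal.ofReal (|q.1 - q.2| ^ p) ∂γ
        + (2 : ℝ≥0∞) ^ (2 * p - 1) * ∫⁻ t, ENNReal.ofReal (|t| ^ p) ∂ξ := by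
        rw [hint1, hintA, hintB, ← two_mul, ← mul_assoc]
        congr 2
        rw [show (2 : ℝ) * p - 1 = (2 * p - 2) + 1 by ring,
          ENNReal.rpow_add _ _ two_ne_zero ENNReal.ofNat_ne_top, ENNReal.rpow_one]

lemma wpPow_le (p : ℝ) (hp : 1 ≤ p) (A B ξ : Measure ℝ)
    [IsProbabilityMeasure A] [IsProbabilityMeasure B] [IsProbabilityMeasure ξ] :
    WpPow p A B
      ≤ (2 : ℝ≥0∞) ^ (p - 1) * WpPow p (convR A ξ) (convR B ξ)
        + (2 : ℝ≥0∞) ^ (2 * p - 1) * ∫⁻ t, ENNReal.ofReal (|t| ^ p) ∂ξ := by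
  haveI := isProbabilityMeasure_convR A ξ
  haveI := isProbabilityMeasure_convR B ξ
  set c : ℝ≥0∞ := (2 : ℝ≥0∞) ^ (p - 1) with hc
  set Cst : ℝ≥0∞ := (2 : ℝ≥0∞) ^ (2 * p - 1) * ∫⁻ t, ENNReal.ofReal (|t| ^ p) ∂ξ with hC
  have hc_top : c ≠ ∞ := by
    rw [hc]; exact ENNReal.rpow_ne_top_of_nonneg (by linarith) (by norm_num)
  have hc0 : c ≠ 0 := by
    rw [hc]
    simp only [ne_eq, ENNReal.rpow_eq_zero_iff, not_or]
    constructor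
    · rintro ⟨h, -⟩; norm_num at h
    · rintro ⟨h, -⟩; norm_num at h
  have key : ∀ γ : Measure (ℝ × ℝ),
      (γ.map Prod.fst = convR A ξ ∧ γ.map Prod.snd = convR B ξ) →
        WpPow p A B ≤ c * (∫⁻ q, ENNReal.ofReal (|q.1 - q.2| ^ p) ∂γ) + Cst :=
    fun γ h => wpPow_le_of_coupling p hp A B ξ γ h.1 h.2
  calc WpPow p A B
      ≤ ⨅ (γ : Measure (ℝ × ℝ))
          (_ : γ.map Prod.fst = convR A ξ ∧ γ.map Prod.snd = convR B ξ),
            (c * (∫⁻ q, ENNReal.ofReal (|q.1 - q.2| ^ p) ∂γ) + Cst) :=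
        le_iInf₂ fun γ h => key γ h
    _ = c * WpPow p (convR A ξ) (convR B ξ) + Cst := by
        rw [WpPow, ENNReal.mul_iInf' (fun h => absurd h hc_top) (fun h => absurd h hc0),
          ENNReal.iInf_add]
        refine iInf_congr fun γ => ?_
        rw [ENNReal.mul_iInf' (fun h => absurd h hc_top) (fun h => absurd h hc0),
          ENNReal.iInf_add]


lemma gauss_add (σ₁ σ₂ : ℝ) (h1 : 0 ≤ σ₁) (h12 : σ₁ ≤ σ₂) :
    convR (gaussR σ₁) (gaussR (Real.sqrt (σ₂ ^ 2 - σ₁ ^ 2))) = gaussR σ₂ := by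
  unfold gaussR
  rw [convR_gaussianReal]
  congr 1
  have hσ₂ : 0 ≤ σ₂ := h1.trans h12
  have hsub : 0 ≤ σ₂ ^ 2 - σ₁ ^ 2 := by nlinarith
  apply NNReal.coe_injective
  push_cast
  rw [Real.coe_toNNReal _ h1, Real.coe_toNNReal _ hσ₂,
    Real.coe_toNNReal _ (Real.sqrt_nonneg _), Real.sq_sqrt hsub]
  ring

lemma gaussR_sqrt (r : ℝ) (hr : 0 ≤ r) : gaussR (Real.sqrt r) = gaussianReal 0 r.toNNReal := by
  unfold gaussR
  congr 1
  apply NNReal.coe_injective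
  push_cast
  rw [Real.coe_toNNReal _ (Real.sqrt_nonneg r), Real.coe_toNNReal _ hr, Real.sq_sqrt hr]

lemma meas_inner {d : ℕ} (u : Sph d) :
    Measurable fun x : Ed d => (inner ℝ (u : Ed d) x : ℝ) :=
  (continuous_const.inner continuous_id).measurable

lemma smProj_eq {d : ℕ} (σ₁ σ₂ : ℝ) (h1 : 0 ≤ σ₁) (h12 : σ₁ ≤ σ₂) (u : Sph d)
    (μ : Measure (Ed d)) [IsProbabilityMeasure μ] :
    smProj σ₂ u μ = convR (smProj σ₁ u μ) (gaussR (Real.sqrt (σ₂ ^ 2 - σ₁ ^ 2))) := by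
  haveI : IsProbabilityMeasure (radonProj u μ) :=
    Measure.isProbabilityMeasure_map (meas_inner u).aemeasurable
  unfold smProj
  rw [convR_assoc, gauss_add σ₁ σ₂ h1 h12]

lemma ud_univ_le (d : ℕ) : ud d univ ≤ 1 := by
  rw [ud, Measure.smul_apply, smul_eq_mul]
  exact ENNReal.inv_mul_le_one _

/-- Relation between Gaussian-smoothed sliced Wasserstein distances under
two noise levels `0 ≤ σ₁ ≤ σ₂`:
`GSSW_{σ₁}^p(μ,ν) ≤ 2^{p−1} GSSW_{σ₂}^p(μ,ν) + 2^{2p−1} E[|Z|^p]`, `Z ~ N(0, σ₂² − σ₁²)`. -/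
theorem gssw_noise_levels
    (d : ℕ) (hd : 1 ≤ d) (p : ℝ) (hp : 1 ≤ p)
    (σ₁ σ₂ : ℝ) (hσ₁ : 0 ≤ σ₁) (hσ₁₂ : σ₁ ≤ σ₂)
    (μ ν : Measure (Ed d)) [IsProbabilityMeasure μ] [IsProbabilityMeasure ν]
    (hμ : FiniteMomentP p μ) (hν : FiniteMomentP p ν) :
    GSSWpow p σ₁ μ ν
      ≤ ENNReal.ofReal ((2 : ℝ) ^ (p - 1)) * GSSWpow p σ₂ μ ν
        + ENNReal.ofReal ((2 : ℝ) ^ (2 * p - 1))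
          * ∫⁻ t, ENNReal.ofReal (|t| ^ p) ∂(gaussianReal 0 ((σ₂ ^ 2 - σ₁ ^ 2).toNNReal)) := by
  have hσ₂ : 0 ≤ σ₂ := hσ₁.trans hσ₁₂
  have hsub : 0 ≤ σ₂ ^ 2 - σ₁ ^ 2 := by nlinarith
  have hp0 : (0:ℝ) ≤ p - 1 := by linarith
  have hp0' : (0:ℝ) ≤ 2 * p - 1 := by linarith
  have hgR : gaussR (Real.sqrt (σ₂ ^ 2 - σ₁ ^ 2))
      = gaussianReal 0 ((σ₂ ^ 2 - σ₁ ^ 2).toNNReal) := gaussR_sqrt _ hsub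
  have c1 : ENNReal.ofReal ((2 : ℝ) ^ (p - 1)) = (2 : ℝ≥0∞) ^ (p - 1) := by
    rw [← ENNReal.ofReal_rpow_of_pos two_pos]
    norm_num
  have c2 : ENNReal.ofReal ((2 : ℝ) ^ (2 * p - 1)) = (2 : ℝ≥0∞) ^ (2 * p - 1) := by
    rw [← ENNReal.ofReal_rpow_of_pos two_pos]
    norm_num
  rw [c1, c2]
  have hpt : ∀ u : Sph d,
      WpPow p (smProj σ₁ u μ) (smProj σ₁ u ν)
        ≤ (2 : ℝ≥0∞) ^ (p - 1) * WpPow p (smProj σ₂ u μ) (smProj σ₂ u ν)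
          + (2 : ℝ≥0∞) ^ (2 * p - 1)
            * ∫⁻ t, ENNReal.ofReal (|t| ^ p) ∂(gaussianReal 0 ((σ₂ ^ 2 - σ₁ ^ 2).toNNReal)) := by
    intro u
    haveI : IsProbabilityMeasure (radonProj u μ) :=
      Measure.isProbabilityMeasure_map (meas_inner u).aemeasurable
    haveI : IsProbabilityMeasure (radonProj u ν) :=
      Measure.isProbabilityMeasure_map (meas_inner u).aemeasurable
    haveI : IsProbabilityMeasure (smProj σ₁ u μ) := isProbabilityMeasure_convR _ _
    haveI : IsProbabilityMeasure (smProj σ₁ u ν) := isProbabilityMeasure_convR _ _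
    rw [smProj_eq σ₁ σ₂ hσ₁ hσ₁₂ u μ, smProj_eq σ₁ σ₂ hσ₁ hσ₁₂ u ν, ← hgR]
    exact wpPow_le p hp _ _ _
  unfold GSSWpow
  calc ∫⁻ u, WpPow p (smProj σ₁ u μ) (smProj σ₁ u ν) ∂(ud d)
      ≤ ∫⁻ u, ((2 : ℝ≥0∞) ^ (p - 1) * WpPow p (smProj σ₂ u μ) (smProj σ₂ u ν)
          + (2 : ℝ≥0∞) ^ (2 * p - 1)
            * ∫⁻ t, ENNReal.ofReal (|t| ^ p)
                ∂(gaussianReal 0 ((σ₂ ^ 2 - σ₁ ^ 2).toNNReal))) ∂(ud d) :=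
        lintegral_mono hpt
    _ = (∫⁻ u, (2 : ℝ≥0∞) ^ (p - 1) * WpPow p (smProj σ₂ u μ) (smProj σ₂ u ν) ∂(ud d))
        + ((2 : ℝ≥0∞) ^ (2 * p - 1)
            * ∫⁻ t, ENNReal.ofReal (|t| ^ p)
                ∂(gaussianReal 0 ((σ₂ ^ 2 - σ₁ ^ 2).toNNReal))) * (ud d) univ := by
        rw [lintegral_add_right _ measurable_const, lintegral_const]
    _ ≤ (2 : ℝ≥0∞) ^ (p - 1) * (∫⁻ u, WpPow p (smProj σ₂ u μ) (smProj σ₂ u ν) ∂(ud d))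
        + (2 : ℝ≥0∞) ^ (2 * p - 1)
            * ∫⁻ t, ENNReal.ofReal (|t| ^ p)
                ∂(gaussianReal 0 ((σ₂ ^ 2 - σ₁ ^ 2).toNNReal)) := by
        rw [lintegral_const_mul' _ _ (ENNReal.rpow_ne_top_of_nonneg hp0 (by norm_num))]
        refine add_le_add le_rfl ?_
        calc _ ≤ _ * 1 := mul_le_mul_right (ud_univ_le d) _
          _ = _ := mul_one _
end
end

section
/- Let p ≥ 1 and μ, ν ∈ P_p(ℝ^d). Then the map σ ↦ GSSW_σ^p(μ,ν) is continuous on [0,∞), where GSSW_0^p(μ,ν) = ∫_{S^{d-1}} W_p(R_u μ, R_u ν)^p du_d(u) is the (unsmoothed) sliced Wasserstein distance. -/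
open MeasureTheory ProbabilityTheory Metric Filter
open scoped ENNReal NNReal

noncomputable section

namespace GSSWaux

variable {p : ℝ}

lemma measurable_cost {p : ℝ} (hp0 : 0 ≤ p) :
    Measurable fun q : ℝ × ℝ => ENNReal.ofReal (|q.1 - q.2| ^ p) :=
  (((Real.continuous_rpow_const hp0).measurable.comp
    (measurable_fst.sub measurable_snd).abs)).ennreal_ofReal

lemma isProb_of_map_fst {γ : Measure (ℝ × ℝ)} {η : Measure ℝ} [IsProbabilityMeasure η]
    (h : γ.map Prod.fst = η) : IsProbabilityMeasure γ := by
  constructor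
  have h2 : (γ.map Prod.fst) Set.univ = γ Set.univ := by
    rw [Measure.map_apply measurable_fst MeasurableSet.univ]; rfl
  rw [h] at h2
  rw [← h2, measure_univ]

lemma WpPow_le_lintegral (hp0 : 0 ≤ p) {Ω : Type*} [MeasurableSpace Ω] (γ : Measure Ω)
    {f g : Ω → ℝ} (hf : Measurable f) (hg : Measurable g) :
    WpPow p (γ.map f) (γ.map g) ≤ ∫⁻ ω, ENNReal.ofReal (|f ω - g ω| ^ p) ∂γ := by
  have hfg : Measurable fun ω => (f ω, g ω) := hf.prodMk hg
  refine iInf_le_of_le (γ.map fun ω => (f ω, g ω)) (iInf_le_of_le ⟨?_, ?_⟩ ?_)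
  · rw [Measure.map_map measurable_fst hfg]; rfl
  · rw [Measure.map_map measurable_snd hfg]; rfl
  · rw [lintegral_map (measurable_cost hp0) hfg]

lemma WpPow_symm (hp0 : 0 ≤ p) (η ζ : Measure ℝ) : WpPow p η ζ = WpPow p ζ η := by
  have key : ∀ η ζ : Measure ℝ, WpPow p ζ η ≤ WpPow p η ζ := by
    intro η ζ
    refine le_iInf fun γ => le_iInf fun hγ => ?_
    refine iInf_le_of_le (γ.map Prod.swap) (iInf_le_of_le ⟨?_, ?_⟩ ?_)
    · rw [Measure.map_map measurable_fst measurable_swap]; exact hγ.2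
    · rw [Measure.map_map measurable_snd measurable_swap]; exact hγ.1
    · rw [lintegral_map (measurable_cost hp0) measurable_swap]
      exact le_of_eq (lintegral_congr fun q => by rw [abs_sub_comm]; rfl)
  exact le_antisymm (key ζ η) (key η ζ)

lemma compProd_prod_fst {α : Type*} [MeasurableSpace α] (κ : Measure α) [SFinite κ]
    (k₁ k₂ : ProbabilityTheory.Kernel α ℝ) [IsMarkovKernel k₁] [IsMarkovKernel k₂] :
    (κ ⊗ₘ (k₁ ×ₖ k₂)).map (fun w => (w.1, w.2.1)) = κ ⊗ₘ k₁ := by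
  have hm : Measurable fun w : α × ℝ × ℝ => (w.1, w.2.1) :=
    measurable_fst.prodMk measurable_snd.fst
  ext s hs
  rw [Measure.map_apply hm hs, Measure.compProd_apply (hm hs), Measure.compProd_apply hs]
  refine lintegral_congr fun a => ?_
  rw [Kernel.prod_apply]
  have hset : Prod.mk a ⁻¹' ((fun w : α × ℝ × ℝ => (w.1, w.2.1)) ⁻¹' s) =
      (Prod.mk a ⁻¹' s) ×ˢ Set.univ := by
    ext q; simp [Set.mem_prod]
  rw [hset, Measure.prod_prod, measure_univ, mul_one]

lemma compProd_prod_snd {α : Type*} [MeasurableSpace α] (κ : Measure α) [SFinite κ]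
    (k₁ k₂ : ProbabilityTheory.Kernel α ℝ) [IsMarkovKernel k₁] [IsMarkovKernel k₂] :
    (κ ⊗ₘ (k₁ ×ₖ k₂)).map (fun w => (w.1, w.2.2)) = κ ⊗ₘ k₂ := by
  have hm : Measurable fun w : α × ℝ × ℝ => (w.1, w.2.2) :=
    measurable_fst.prodMk measurable_snd.snd
  ext s hs
  rw [Measure.map_apply hm hs, Measure.compProd_apply (hm hs), Measure.compProd_apply hs]
  refine lintegral_congr fun a => ?_
  rw [Kernel.prod_apply]
  have hset : Prod.mk a ⁻¹' ((fun w : α × ℝ × ℝ => (w.1, w.2.2)) ⁻¹' s) =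
      Set.univ ×ˢ (Prod.mk a ⁻¹' s) := by
    ext q; simp [Set.mem_prod]
  rw [hset, Measure.prod_prod, measure_univ, one_mul]

lemma glue_le (hp : 1 ≤ p) (γ₁ γ₂ : Measure (ℝ × ℝ))
    [IsProbabilityMeasure γ₁] [IsProbabilityMeasure γ₂]
    (h : γ₁.map Prod.snd = γ₂.map Prod.fst) :
    (WpPow p (γ₁.map Prod.fst) (γ₂.map Prod.snd)) ^ (1/p) ≤
      (∫⁻ q, ENNReal.ofReal (|q.1 - q.2| ^ p) ∂γ₁) ^ (1/p) +
      (∫⁻ q, ENNReal.ofReal (|q.1 - q.2| ^ p) ∂γ₂) ^ (1/p) := by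
  have hp0 : 0 ≤ p := zero_le_one.trans hp
  have hp0' : (0:ℝ) ≤ 1/p := by positivity
  set κ : Measure ℝ := γ₁.map Prod.snd with hκdef
  haveI : IsProbabilityMeasure κ := Measure.isProbabilityMeasure_map measurable_snd.aemeasurable
  set ρ₁ : Measure (ℝ × ℝ) := γ₁.map Prod.swap with hρ₁def
  haveI : IsProbabilityMeasure ρ₁ := Measure.isProbabilityMeasure_map measurable_swap.aemeasurable
  have hρ₁fst : ρ₁.fst = κ := Measure.fst_map_swap
  have hγ₂fst : γ₂.fst = κ := h.symm
  set k₁ := ρ₁.condKernel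
  set k₂ := γ₂.condKernel
  set π : Measure (ℝ × ℝ × ℝ) := κ ⊗ₘ (k₁ ×ₖ k₂) with hπdef
  have hπ₁ : π.map (fun w => (w.1, w.2.1)) = ρ₁ := by
    rw [hπdef, compProd_prod_fst, ← hρ₁fst]
    exact ρ₁.disintegrate ρ₁.condKernel
  have hπ₂ : π.map (fun w => (w.1, w.2.2)) = γ₂ := by
    rw [hπdef, compProd_prod_snd, ← hγ₂fst]
    exact γ₂.disintegrate γ₂.condKernel
  -- the glued coupling
  set γ : Measure (ℝ × ℝ) := π.map (fun w => w.2) with hγdef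
  have hγfst : γ.map Prod.fst = γ₁.map Prod.fst := by
    rw [hγdef, Measure.map_map measurable_fst measurable_snd]
    have : (Prod.fst ∘ Prod.snd : ℝ × ℝ × ℝ → ℝ)
        = Prod.snd ∘ (fun w : ℝ × ℝ × ℝ => (w.1, w.2.1)) := rfl
    rw [this, ← Measure.map_map measurable_snd (measurable_fst.prodMk measurable_snd.fst), hπ₁]
    have : ρ₁.map Prod.snd = ρ₁.snd := rfl
    rw [this, hρ₁def, Measure.snd_map_swap]
    rfl
  have hγsnd : γ.map Prod.snd = γ₂.map Prod.snd := by
    rw [hγdef, Measure.map_map measurable_snd measurable_snd]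
    have : (Prod.snd ∘ Prod.snd : ℝ × ℝ × ℝ → ℝ)
        = Prod.snd ∘ (fun w : ℝ × ℝ × ℝ => (w.1, w.2.2)) := rfl
    rw [this, ← Measure.map_map measurable_snd (measurable_fst.prodMk measurable_snd.snd), hπ₂]
  -- cost bound
  have hcost : WpPow p (γ₁.map Prod.fst) (γ₂.map Prod.snd)
      ≤ ∫⁻ w, ENNReal.ofReal (|w.2.1 - w.2.2| ^ p) ∂π := by
    refine le_trans (iInf_le_of_le γ (iInf_le_of_le ⟨hγfst, hγsnd⟩ le_rfl)) ?_
    rw [hγdef, lintegral_map (measurable_cost hp0) measurable_snd]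
  set F₁ : ℝ × ℝ × ℝ → ℝ≥0∞ := fun w => ENNReal.ofReal |w.2.1 - w.1| with hF₁def
  set F₂ : ℝ × ℝ × ℝ → ℝ≥0∞ := fun w => ENNReal.ofReal |w.1 - w.2.2| with hF₂def
  have hF₁m : Measurable F₁ := (measurable_snd.fst.sub measurable_fst).abs.ennreal_ofReal
  have hF₂m : Measurable F₂ := (measurable_fst.sub measurable_snd.snd).abs.ennreal_ofReal
  have hpt : ∀ w : ℝ × ℝ × ℝ,
      ENNReal.ofReal (|w.2.1 - w.2.2| ^ p) ≤ (F₁ + F₂) w ^ p := by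
    intro w
    rw [← ENNReal.ofReal_rpow_of_nonneg (abs_nonneg _) hp0]
    refine ENNReal.rpow_le_rpow ?_ hp0
    have : (F₁ + F₂) w = ENNReal.ofReal (|w.2.1 - w.1| + |w.1 - w.2.2|) := by
      simp [hF₁def, hF₂def, ENNReal.ofReal_add (abs_nonneg _) (abs_nonneg _)]
    rw [this]
    exact ENNReal.ofReal_le_ofReal (abs_sub_le _ _ _)
  have hLp := ENNReal.lintegral_Lp_add_le (μ := π) hF₁m.aemeasurable hF₂m.aemeasurable hp
  have hF₁int : ∫⁻ w, F₁ w ^ p ∂π = ∫⁻ q, ENNReal.ofReal (|q.1 - q.2| ^ p) ∂γ₁ := by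
    have e1 : ∀ w : ℝ × ℝ × ℝ, F₁ w ^ p = ENNReal.ofReal (|w.2.1 - w.1| ^ p) := fun w =>
      ENNReal.ofReal_rpow_of_nonneg (abs_nonneg _) hp0
    simp_rw [e1]
    have hmeas' : Measurable fun q : ℝ × ℝ => ENNReal.ofReal (|q.2 - q.1| ^ p) :=
      (((Real.continuous_rpow_const hp0).measurable.comp
        (measurable_snd.sub measurable_fst).abs)).ennreal_ofReal
    have hswap : ∫⁻ q, ENNReal.ofReal (|q.1 - q.2| ^ p) ∂γ₁
        = ∫⁻ q, ENNReal.ofReal (|q.2 - q.1| ^ p) ∂ρ₁ := by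
      rw [hρ₁def, lintegral_map hmeas' measurable_swap]; rfl
    rw [hswap, ← hπ₁, lintegral_map hmeas' (measurable_fst.prodMk measurable_snd.fst)]
  have hF₂int : ∫⁻ w, F₂ w ^ p ∂π = ∫⁻ q, ENNReal.ofReal (|q.1 - q.2| ^ p) ∂γ₂ := by
    have e2 : ∀ w : ℝ × ℝ × ℝ, F₂ w ^ p = ENNReal.ofReal (|w.1 - w.2.2| ^ p) := fun w =>
      ENNReal.ofReal_rpow_of_nonneg (abs_nonneg _) hp0
    simp_rw [e2]
    rw [← hπ₂, lintegral_map (measurable_cost hp0) (measurable_fst.prodMk measurable_snd.snd)]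
  calc (WpPow p (γ₁.map Prod.fst) (γ₂.map Prod.snd)) ^ (1/p)
      ≤ (∫⁻ w, (F₁ + F₂) w ^ p ∂π) ^ (1/p) :=
        ENNReal.rpow_le_rpow (hcost.trans (lintegral_mono hpt)) hp0'
    _ ≤ (∫⁻ w, F₁ w ^ p ∂π) ^ (1/p) + (∫⁻ w, F₂ w ^ p ∂π) ^ (1/p) := hLp
    _ = _ := by rw [hF₁int, hF₂int]

lemma rpow_rpow_inv (hp : 1 ≤ p) (x : ℝ≥0∞) : (x ^ (1/p)) ^ p = x := by
  have hp0 : p ≠ 0 := by positivity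
  rw [← ENNReal.rpow_mul, one_div, inv_mul_cancel₀ hp0, ENNReal.rpow_one]

lemma rpow_add_le (hp : 1 ≤ p) (A δ : ℝ≥0∞) :
    (A + δ) ^ (1/p) ≤ A ^ (1/p) + δ ^ (1/p) := by
  have := ENNReal.rpow_add_rpow_le_add (A ^ (1/p)) (δ ^ (1/p)) hp
  rwa [rpow_rpow_inv hp, rpow_rpow_inv hp] at this

lemma WpPow_triangle (hp : 1 ≤ p) (η κ ζ : Measure ℝ)
    [IsProbabilityMeasure η] [IsProbabilityMeasure κ] [IsProbabilityMeasure ζ] :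
    WpPow p η ζ ^ (1/p) ≤ WpPow p η κ ^ (1/p) + WpPow p κ ζ ^ (1/p) := by
  have hp0 : 0 ≤ p := zero_le_one.trans hp
  have hppos : 0 < p := lt_of_lt_of_le one_pos hp
  set A := WpPow p η κ with hA
  set B := WpPow p κ ζ with hB
  by_cases hAt : A = ⊤
  · rw [hAt, ENNReal.top_rpow_of_pos (by positivity)]; simp
  by_cases hBt : B = ⊤
  · rw [hBt, ENNReal.top_rpow_of_pos (by positivity)]; simp
  refine ENNReal.le_of_forall_pos_le_add fun ε hε _ => ?_
  set δ : ℝ≥0∞ := ((ε : ℝ≥0∞)/2) ^ p with hδ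
  have hδ0 : δ ≠ 0 := by
    rw [hδ]
    refine (ENNReal.rpow_pos ?_ (ENNReal.div_lt_top ENNReal.coe_ne_top two_ne_zero).ne).ne'
    simp only [ENNReal.div_pos_iff, ne_eq, ENNReal.coe_eq_zero, hε.ne', not_false_eq_true,
      ENNReal.ofNat_ne_top, and_self]
  have hδroot : δ ^ (1/p) = (ε : ℝ≥0∞)/2 := by
    rw [hδ, ← ENNReal.rpow_mul, mul_one_div, div_self hppos.ne', ENNReal.rpow_one]
  obtain ⟨γ₁, hm₁, hc₁⟩ : ∃ γ₁ : Measure (ℝ × ℝ),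
      (γ₁.map Prod.fst = η ∧ γ₁.map Prod.snd = κ) ∧
      ∫⁻ q, ENNReal.ofReal (|q.1 - q.2| ^ p) ∂γ₁ < A + δ := by
    have hlt : WpPow p η κ < A + δ := ENNReal.lt_add_right hAt hδ0
    rw [WpPow, iInf_lt_iff] at hlt
    obtain ⟨γ₁, hγ₁⟩ := hlt
    rw [iInf_lt_iff] at hγ₁
    obtain ⟨hm, hlt'⟩ := hγ₁
    exact ⟨γ₁, hm, hlt'⟩
  obtain ⟨γ₂, hm₂, hc₂⟩ : ∃ γ₂ : Measure (ℝ × ℝ),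
      (γ₂.map Prod.fst = κ ∧ γ₂.map Prod.snd = ζ) ∧
      ∫⁻ q, ENNReal.ofReal (|q.1 - q.2| ^ p) ∂γ₂ < B + δ := by
    have hlt : WpPow p κ ζ < B + δ := ENNReal.lt_add_right hBt hδ0
    rw [WpPow, iInf_lt_iff] at hlt
    obtain ⟨γ₂, hγ₂⟩ := hlt
    rw [iInf_lt_iff] at hγ₂
    obtain ⟨hm, hlt'⟩ := hγ₂
    exact ⟨γ₂, hm, hlt'⟩
  haveI : IsProbabilityMeasure γ₁ := isProb_of_map_fst hm₁.1
  haveI : IsProbabilityMeasure γ₂ := isProb_of_map_fst hm₂.1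
  have hcompat : γ₁.map Prod.snd = γ₂.map Prod.fst := by rw [hm₁.2, hm₂.1]
  have hglue := glue_le hp γ₁ γ₂ hcompat
  rw [hm₁.1, hm₂.2] at hglue
  calc WpPow p η ζ ^ (1/p)
      ≤ (∫⁻ q, ENNReal.ofReal (|q.1 - q.2| ^ p) ∂γ₁) ^ (1/p)
        + (∫⁻ q, ENNReal.ofReal (|q.1 - q.2| ^ p) ∂γ₂) ^ (1/p) := hglue
    _ ≤ (A + δ) ^ (1/p) + (B + δ) ^ (1/p) := by
        exact add_le_add (ENNReal.rpow_le_rpow hc₁.le (by positivity))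
          (ENNReal.rpow_le_rpow hc₂.le (by positivity))
    _ ≤ (A ^ (1/p) + δ ^ (1/p)) + (B ^ (1/p) + δ ^ (1/p)) := by
        exact add_le_add (rpow_add_le hp _ _) (rpow_add_le hp _ _)
    _ = A ^ (1/p) + B ^ (1/p) + ε := by
        rw [hδroot, add_add_add_comm, ENNReal.add_halves]

lemma gauss_pt_bound (hp : 1 ≤ p) (z : ℝ) :
    gaussianPDFReal 0 1 z * |z| ^ p ≤ Real.exp (p^2) * Real.exp (-(4⁻¹) * z^2) := by
  have hp0 : 0 ≤ p := zero_le_one.trans hp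
  have h1 : gaussianPDFReal 0 1 z ≤ Real.exp (-(2⁻¹) * z^2) := by
    rw [gaussianPDFReal]
    have h2π : (1:ℝ) ≤ Real.sqrt (2 * Real.pi * (1:ℝ≥0)) := by
      rw [show ((1:ℝ≥0):ℝ) = 1 by norm_num, mul_one]
      rw [show (1:ℝ) = Real.sqrt 1 by simp]
      exact Real.sqrt_le_sqrt (by nlinarith [Real.pi_gt_three])
    have hinv : (Real.sqrt (2 * Real.pi * (1:ℝ≥0)))⁻¹ ≤ 1 := by
      refine inv_le_one_of_one_le₀ h2π
    have hexp : Real.exp (-(z - 0)^2 / (2 * (1:ℝ≥0))) = Real.exp (-(2⁻¹) * z^2) := by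
      norm_num; ring_nf
    calc (Real.sqrt (2 * Real.pi * (1:ℝ≥0)))⁻¹ * Real.exp (-(z - 0)^2 / (2 * (1:ℝ≥0)))
        ≤ 1 * Real.exp (-(z - 0)^2 / (2 * (1:ℝ≥0))) := by
          exact mul_le_mul_of_nonneg_right hinv (Real.exp_nonneg _)
      _ = Real.exp (-(2⁻¹) * z^2) := by rw [one_mul, hexp]
  have h2 : |z| ^ p ≤ Real.exp (p^2) * Real.exp (4⁻¹ * z^2) := by
    rcases le_or_gt |z| 1 with hz | hz
    · calc |z| ^ p ≤ 1 := Real.rpow_le_one (abs_nonneg _) hz hp0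
        _ ≤ _ := by
          rw [← Real.exp_add]
          exact Real.one_le_exp (by positivity)
    · have hzpos : 0 < |z| := lt_trans one_pos hz
      rw [Real.rpow_def_of_pos hzpos, ← Real.exp_add]
      refine Real.exp_le_exp.mpr ?_
      have hlog : Real.log |z| ≤ |z| :=
        (Real.log_le_sub_one_of_pos hzpos).trans (by linarith)
      have : p * Real.log |z| ≤ p * |z| := mul_le_mul_of_nonneg_left hlog hp0
      nlinarith [sq_nonneg (|z| - 2*p), sq_abs z]
  calc gaussianPDFReal 0 1 z * |z| ^ p
      ≤ Real.exp (-(2⁻¹) * z^2) * (Real.exp (p^2) * Real.exp (4⁻¹ * z^2)) :=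
        mul_le_mul h1 h2 (by positivity) (Real.exp_nonneg _)
    _ = Real.exp (p^2) * Real.exp (-(4⁻¹) * z^2) := by
        rw [← Real.exp_add, ← Real.exp_add, ← Real.exp_add]
        ring_nf

lemma gaussR_one : gaussR 1 = gaussianReal 0 1 := by
  unfold gaussR
  norm_num

lemma cp_lt_top (hp : 1 ≤ p) : ∫⁻ z, ENNReal.ofReal (|z| ^ p) ∂(gaussR 1) < ⊤ := by
  have hp0 : 0 ≤ p := zero_le_one.trans hp
  have hmz : Measurable fun z : ℝ => ENNReal.ofReal (|z| ^ p) :=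
    ((Real.continuous_rpow_const hp0).measurable.comp measurable_abs).ennreal_ofReal
  rw [gaussR_one, gaussianReal_of_var_ne_zero _ one_ne_zero,
    lintegral_withDensity_eq_lintegral_mul volume (measurable_gaussianPDF 0 1) hmz]
  have hpt : ∀ z : ℝ, (gaussianPDF 0 1 * fun z => ENNReal.ofReal (|z| ^ p)) z
      ≤ ENNReal.ofReal (Real.exp (p^2) * Real.exp (-(4⁻¹) * z^2)) := by
    intro z
    have : (gaussianPDF 0 1 * fun z => ENNReal.ofReal (|z| ^ p)) z
        = ENNReal.ofReal (gaussianPDFReal 0 1 z * |z| ^ p) := by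
      simp only [Pi.mul_apply, gaussianPDF]
      rw [← ENNReal.ofReal_mul (gaussianPDFReal_nonneg 0 1 z)]
    rw [this]
    exact ENNReal.ofReal_le_ofReal (gauss_pt_bound hp z)
  refine lt_of_le_of_lt (lintegral_mono hpt) ?_
  have hint : Integrable (fun z : ℝ => Real.exp (p^2) * Real.exp (-(4⁻¹) * z^2)) := by
    exact (integrable_exp_neg_mul_sq (by norm_num : (0:ℝ) < 4⁻¹)).const_mul _
  refine lt_of_le_of_lt ?_ hint.hasFiniteIntegral
  refine lintegral_mono fun z => ?_
  rw [← ofReal_norm]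
  exact ENNReal.ofReal_le_ofReal (le_abs_self _)


lemma convR_gauss_eq (ρ : Measure ℝ) [IsProbabilityMeasure ρ] {σ : ℝ} (hσ : 0 ≤ σ) :
    convR ρ (gaussR σ) = (ρ.prod (gaussR 1)).map (fun q => q.1 + σ * q.2) := by
  have h1 : (gaussR 1).map (σ * ·) = gaussR σ := by
    unfold gaussR
    rw [gaussianReal_map_const_mul]
    congr 1
    · exact mul_zero σ
    · apply NNReal.coe_injective
      push_cast
      rw [Real.coe_toNNReal _ hσ, Real.toNNReal_one]
      norm_num
  calc convR ρ (gaussR σ)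
      = (ρ.prod ((gaussR 1).map (σ * ·))).map (fun q : ℝ × ℝ => q.1 + q.2) := by rw [h1]; rfl
    _ = ((ρ.prod (gaussR 1)).map (Prod.map id (σ * ·))).map (fun q : ℝ × ℝ => q.1 + q.2) := by
        rw [← Measure.map_prod_map _ _ measurable_id (measurable_const_mul σ), Measure.map_id]
    _ = (ρ.prod (gaussR 1)).map (fun q => q.1 + σ * q.2) := by
        rw [Measure.map_map (show Measurable fun q : ℝ × ℝ => q.1 + q.2 from measurable_fst.add measurable_snd)
          (measurable_id.prodMap (measurable_const_mul σ))]
        rfl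

lemma smProj_zero (ρ : Measure ℝ) [IsProbabilityMeasure ρ] : convR ρ (gaussR 0) = ρ := by
  rw [convR_gauss_eq ρ le_rfl]
  have : (fun q : ℝ × ℝ => q.1 + 0 * q.2) = Prod.fst := by ext q; simp
  rw [this, Measure.map_fst_prod, measure_univ, one_smul]

/-- W_p distance (p-th power, 1/p root) between a measure smoothed at two noise levels. -/
lemma dist_noise (hp : 1 ≤ p) (ρ : Measure ℝ) [IsProbabilityMeasure ρ] {σ τ : ℝ}
    (hσ : 0 ≤ σ) (hτ : 0 ≤ τ) :
    (WpPow p (convR ρ (gaussR σ)) (convR ρ (gaussR τ))) ^ (1/p) ≤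
      ENNReal.ofReal |σ - τ| * (∫⁻ z, ENNReal.ofReal (|z| ^ p) ∂(gaussR 1)) ^ (1/p) := by
  have hp0 : 0 ≤ p := zero_le_one.trans hp
  have hmz : Measurable fun z : ℝ => ENNReal.ofReal (|z| ^ p) :=
    ((Real.continuous_rpow_const hp0).measurable.comp measurable_abs).ennreal_ofReal
  rw [convR_gauss_eq ρ hσ, convR_gauss_eq ρ hτ]
  have hb := WpPow_le_lintegral (Ω := ℝ × ℝ) hp0 (ρ.prod (gaussR 1))
    (f := fun q => q.1 + σ * q.2) (g := fun q => q.1 + τ * q.2)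
    (measurable_fst.add (measurable_snd.const_mul σ))
    (measurable_fst.add (measurable_snd.const_mul τ))
  have heq : ∫⁻ q : ℝ × ℝ, ENNReal.ofReal (|(q.1 + σ * q.2) - (q.1 + τ * q.2)| ^ p)
        ∂(ρ.prod (gaussR 1))
      = ENNReal.ofReal (|σ - τ| ^ p) * ∫⁻ z, ENNReal.ofReal (|z| ^ p) ∂(gaussR 1) := by
    have hpt : ∀ q : ℝ × ℝ, ENNReal.ofReal (|(q.1 + σ * q.2) - (q.1 + τ * q.2)| ^ p)
        = ENNReal.ofReal (|σ - τ| ^ p) * ENNReal.ofReal (|q.2| ^ p) := by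
      intro q
      rw [← ENNReal.ofReal_mul (by positivity)]
      congr 1
      rw [← Real.mul_rpow (abs_nonneg _) (abs_nonneg _), ← abs_mul]
      congr 2
      ring
    simp_rw [hpt]
    rw [lintegral_const_mul _ (show Measurable fun q : ℝ × ℝ => ENNReal.ofReal (|q.2| ^ p)
      from hmz.comp measurable_snd)]
    congr 1
    have : ∫⁻ q : ℝ × ℝ, ENNReal.ofReal (|q.2| ^ p) ∂(ρ.prod (gaussR 1))
        = ∫⁻ z, ENNReal.ofReal (|z| ^ p) ∂((ρ.prod (gaussR 1)).map Prod.snd) := by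
      rw [lintegral_map hmz measurable_snd]
    rw [this, Measure.map_snd_prod, measure_univ, one_smul]
  refine le_trans (ENNReal.rpow_le_rpow (hb.trans heq.le) (by positivity)) ?_
  rw [ENNReal.mul_rpow_of_nonneg _ _ (by positivity),
    ← ENNReal.ofReal_rpow_of_nonneg (abs_nonneg _) hp0, ← ENNReal.rpow_mul, one_div,
    mul_inv_cancel₀ (by positivity : p ≠ 0), ENNReal.rpow_one]

/-- Product-coupling bound: `W_p^p(η,ζ) ≤ 2^p (m_p(η) + m_p(ζ))`. -/
lemma WpPow_le_moments (hp : 1 ≤ p) (η ζ : Measure ℝ)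
    [IsProbabilityMeasure η] [IsProbabilityMeasure ζ] :
    WpPow p η ζ ≤ ENNReal.ofReal (2 ^ p) *
      ((∫⁻ x, ENNReal.ofReal (|x| ^ p) ∂η) + ∫⁻ x, ENNReal.ofReal (|x| ^ p) ∂ζ) := by
  have hp0 : 0 ≤ p := zero_le_one.trans hp
  have hmz : Measurable fun z : ℝ => ENNReal.ofReal (|z| ^ p) :=
    ((Real.continuous_rpow_const hp0).measurable.comp measurable_abs).ennreal_ofReal
  have hb := WpPow_le_lintegral (Ω := ℝ × ℝ) hp0 (η.prod ζ)
    (f := Prod.fst) (g := Prod.snd) measurable_fst measurable_snd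
  simp only [Measure.map_fst_prod, Measure.map_snd_prod, measure_univ, one_smul] at hb
  refine hb.trans ?_
  have hpt : ∀ q : ℝ × ℝ, ENNReal.ofReal (|q.1 - q.2| ^ p)
      ≤ ENNReal.ofReal (2 ^ p) * (ENNReal.ofReal (|q.1| ^ p) + ENNReal.ofReal (|q.2| ^ p)) := by
    intro q
    rw [← ENNReal.ofReal_add (by positivity) (by positivity),
      ← ENNReal.ofReal_mul (by positivity)]
    refine ENNReal.ofReal_le_ofReal ?_
    have h1 : |q.1 - q.2| ^ p ≤ (|q.1| + |q.2|) ^ p :=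
      Real.rpow_le_rpow (abs_nonneg _) (abs_sub _ _) hp0
    have h2 : (|q.1| + |q.2|) ^ p ≤ (2 * max |q.1| |q.2|) ^ p := by
      refine Real.rpow_le_rpow (by positivity) ?_ hp0
      rw [two_mul]
      exact add_le_add (le_max_left _ _) (le_max_right _ _)
    have h3 : (2 * max |q.1| |q.2|) ^ p = 2 ^ p * max |q.1| |q.2| ^ p :=
      Real.mul_rpow (by norm_num) (by positivity)
    have h4 : max |q.1| |q.2| ^ p ≤ |q.1| ^ p + |q.2| ^ p := by
      rcases max_cases |q.1| |q.2| with ⟨hm, _⟩ | ⟨hm, _⟩ <;> rw [hm]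
      · nlinarith [Real.rpow_nonneg (abs_nonneg q.2) p]
      · nlinarith [Real.rpow_nonneg (abs_nonneg q.1) p]
    calc |q.1 - q.2| ^ p ≤ (2 * max |q.1| |q.2|) ^ p := h1.trans h2
      _ = 2 ^ p * max |q.1| |q.2| ^ p := h3
      _ ≤ 2 ^ p * (|q.1| ^ p + |q.2| ^ p) := by
          exact mul_le_mul_of_nonneg_left h4 (by positivity)
  refine le_trans (lintegral_mono hpt) ?_
  rw [lintegral_const_mul _ (show Measurable fun q : ℝ × ℝ =>
    ENNReal.ofReal (|q.1| ^ p) + ENNReal.ofReal (|q.2| ^ p)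
    from (hmz.comp measurable_fst).add (hmz.comp measurable_snd))]
  refine mul_le_mul_right ?_ _
  rw [lintegral_add_left (show Measurable fun q : ℝ × ℝ => ENNReal.ofReal (|q.1| ^ p)
    from hmz.comp measurable_fst)]
  have e1 : ∫⁻ q : ℝ × ℝ, ENNReal.ofReal (|q.1| ^ p) ∂(η.prod ζ)
      = ∫⁻ x, ENNReal.ofReal (|x| ^ p) ∂η := by
    have h : ∫⁻ x, ENNReal.ofReal (|x| ^ p) ∂η
        = ∫⁻ x, ENNReal.ofReal (|x| ^ p) ∂((η.prod ζ).map Prod.fst) := by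
      rw [Measure.map_fst_prod, measure_univ, one_smul]
    rw [h, lintegral_map hmz measurable_fst]
  have e2 : ∫⁻ q : ℝ × ℝ, ENNReal.ofReal (|q.2| ^ p) ∂(η.prod ζ)
      = ∫⁻ x, ENNReal.ofReal (|x| ^ p) ∂ζ := by
    have h : ∫⁻ x, ENNReal.ofReal (|x| ^ p) ∂ζ
        = ∫⁻ x, ENNReal.ofReal (|x| ^ p) ∂((η.prod ζ).map Prod.snd) := by
      rw [Measure.map_snd_prod, measure_univ, one_smul]
    rw [h, lintegral_map hmz measurable_snd]
  rw [e1, e2]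

lemma measurable_radon {d : ℕ} (u : Sph d) :
    Measurable fun x : Ed d => (inner ℝ (u : Ed d) x : ℝ) :=
  (continuous_const.inner continuous_id).measurable

lemma isProb_radon {d : ℕ} (u : Sph d) (μ : Measure (Ed d)) [IsProbabilityMeasure μ] :
    IsProbabilityMeasure (radonProj u μ) :=
  Measure.isProbabilityMeasure_map (measurable_radon u).aemeasurable

lemma isProb_convR (η ζ : Measure ℝ) [IsProbabilityMeasure η] [IsProbabilityMeasure ζ] :
    IsProbabilityMeasure (convR η ζ) :=
  Measure.isProbabilityMeasure_map (measurable_fst.add measurable_snd).aemeasurable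

lemma isProb_smProj {d : ℕ} (σ : ℝ) (u : Sph d) (μ : Measure (Ed d))
    [IsProbabilityMeasure μ] : IsProbabilityMeasure (smProj σ u μ) := by
  haveI := isProb_radon u μ
  exact isProb_convR _ _

lemma mom_radon_le (hp0 : 0 ≤ p) {d : ℕ} (u : Sph d) (μ : Measure (Ed d))
    [IsProbabilityMeasure μ] :
    ∫⁻ x, ENNReal.ofReal (|x| ^ p) ∂(radonProj u μ)
      ≤ ∫⁻ x, ENNReal.ofReal (‖x‖ ^ p) ∂μ := by
  have hmz : Measurable fun z : ℝ => ENNReal.ofReal (|z| ^ p) :=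
    ((Real.continuous_rpow_const hp0).measurable.comp measurable_abs).ennreal_ofReal
  rw [radonProj, lintegral_map hmz (measurable_radon u)]
  refine lintegral_mono fun x => ENNReal.ofReal_le_ofReal
    (Real.rpow_le_rpow (abs_nonneg _) ?_ hp0)
  calc |(inner ℝ (u : Ed d) x : ℝ)| ≤ ‖(u : Ed d)‖ * ‖x‖ := abs_real_inner_le_norm _ _
    _ = ‖x‖ := by rw [mem_sphere_zero_iff_norm.mp u.2, one_mul]

/-- The key comparison: `W_p(smProj σ) ≤ W_p(smProj τ) + 2|σ-τ| c_p`. -/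
lemma key_ineq (hp : 1 ≤ p) {d : ℕ} (u : Sph d) (μ ν : Measure (Ed d))
    [IsProbabilityMeasure μ] [IsProbabilityMeasure ν] {σ τ : ℝ} (hσ : 0 ≤ σ) (hτ : 0 ≤ τ) :
    WpPow p (smProj σ u μ) (smProj σ u ν) ^ (1/p)
      ≤ WpPow p (smProj τ u μ) (smProj τ u ν) ^ (1/p)
        + ENNReal.ofReal |σ - τ| *
          (2 * (∫⁻ z, ENNReal.ofReal (|z| ^ p) ∂(gaussR 1)) ^ (1/p)) := by
  haveI := isProb_radon u μ
  haveI := isProb_radon u ν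
  haveI := isProb_smProj σ u μ
  haveI := isProb_smProj σ u ν
  haveI := isProb_smProj τ u μ
  haveI := isProb_smProj τ u ν
  set c : ℝ≥0∞ := (∫⁻ z, ENNReal.ofReal (|z| ^ p) ∂(gaussR 1)) ^ (1/p) with hc
  have t1 := WpPow_triangle hp (smProj σ u μ) (smProj τ u μ) (smProj σ u ν)
  have t2 := WpPow_triangle hp (smProj τ u μ) (smProj τ u ν) (smProj σ u ν)
  have d1 : WpPow p (smProj σ u μ) (smProj τ u μ) ^ (1/p) ≤ ENNReal.ofReal |σ - τ| * c :=
    dist_noise hp (radonProj u μ) hσ hτ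
  have d2 : WpPow p (smProj τ u ν) (smProj σ u ν) ^ (1/p) ≤ ENNReal.ofReal |σ - τ| * c := by
    have := dist_noise hp (radonProj u ν) hτ hσ
    rwa [abs_sub_comm] at this
  calc WpPow p (smProj σ u μ) (smProj σ u ν) ^ (1/p)
      ≤ WpPow p (smProj σ u μ) (smProj τ u μ) ^ (1/p)
        + WpPow p (smProj τ u μ) (smProj σ u ν) ^ (1/p) := t1
    _ ≤ ENNReal.ofReal |σ - τ| * c
        + (WpPow p (smProj τ u μ) (smProj τ u ν) ^ (1/p)
          + WpPow p (smProj τ u ν) (smProj σ u ν) ^ (1/p)) := add_le_add d1 t2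
    _ ≤ ENNReal.ofReal |σ - τ| * c
        + (WpPow p (smProj τ u μ) (smProj τ u ν) ^ (1/p) + ENNReal.ofReal |σ - τ| * c) := by
          exact add_le_add_right (add_le_add_right d2 _) _
    _ = WpPow p (smProj τ u μ) (smProj τ u ν) ^ (1/p)
        + ENNReal.ofReal |σ - τ| * (2 * c) := by ring

/-- Uniform bound on `W_p^p` of the smoothed projections for `σ ∈ [0, T]`. -/
lemma f_le_M (hp : 1 ≤ p) {d : ℕ} (u : Sph d) (μ ν : Measure (Ed d))
    [IsProbabilityMeasure μ] [IsProbabilityMeasure ν] {σ T : ℝ} (hσ : 0 ≤ σ) (hσT : σ ≤ T) :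
    WpPow p (smProj σ u μ) (smProj σ u ν)
      ≤ ((ENNReal.ofReal (2 ^ p) * ((∫⁻ x, ENNReal.ofReal (‖x‖ ^ p) ∂μ)
            + ∫⁻ x, ENNReal.ofReal (‖x‖ ^ p) ∂ν)) ^ (1/p)
          + ENNReal.ofReal T *
            (2 * (∫⁻ z, ENNReal.ofReal (|z| ^ p) ∂(gaussR 1)) ^ (1/p))) ^ p := by
  have hp0 : 0 ≤ p := zero_le_one.trans hp
  haveI := isProb_radon u μ
  haveI := isProb_radon u ν
  have h0 : WpPow p (smProj 0 u μ) (smProj 0 u ν)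
      ≤ ENNReal.ofReal (2 ^ p) * ((∫⁻ x, ENNReal.ofReal (‖x‖ ^ p) ∂μ)
          + ∫⁻ x, ENNReal.ofReal (‖x‖ ^ p) ∂ν) := by
    have e1 : smProj 0 u μ = radonProj u μ := smProj_zero _
    have e2 : smProj 0 u ν = radonProj u ν := smProj_zero _
    rw [e1, e2]
    refine (WpPow_le_moments hp _ _).trans ?_
    exact mul_le_mul_right (add_le_add (mom_radon_le hp0 u μ) (mom_radon_le hp0 u ν)) _
  have hkey := key_ineq hp u μ ν hσ le_rfl (τ := 0)
  have hx : WpPow p (smProj σ u μ) (smProj σ u ν)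
      = (WpPow p (smProj σ u μ) (smProj σ u ν) ^ (1/p)) ^ p := (rpow_rpow_inv hp _).symm
  rw [hx]
  refine ENNReal.rpow_le_rpow (hkey.trans ?_) hp0
  refine add_le_add (ENNReal.rpow_le_rpow h0 (by positivity)) ?_
  refine mul_le_mul_left ?_ _
  rw [sub_zero, abs_of_nonneg hσ]
  exact ENNReal.ofReal_le_ofReal hσT

/-- Real MVT bound: `x ↦ x^p` is Lipschitz on `[0,K]` with constant `p K^(p-1)`. -/
lemma rpow_lipschitz (hp : 1 ≤ p) {K a b : ℝ} (hK : 0 ≤ K)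
    (ha : a ∈ Set.Icc 0 K) (hb : b ∈ Set.Icc 0 K) :
    |a ^ p - b ^ p| ≤ p * K ^ (p - 1) * |a - b| := by
  have hderiv : ∀ x ∈ Set.Icc (0:ℝ) K,
      HasDerivWithinAt (fun x : ℝ => x ^ p) (p * x ^ (p - 1)) (Set.Icc 0 K) x := fun x _ =>
    (Real.hasDerivAt_rpow_const (Or.inr hp)).hasDerivWithinAt
  have hbound : ∀ x ∈ Set.Icc (0:ℝ) K, ‖p * x ^ (p - 1)‖ ≤ p * K ^ (p - 1) := by
    intro x hx
    rw [Real.norm_eq_abs, abs_of_nonneg (mul_nonneg (by linarith) (Real.rpow_nonneg hx.1 _))]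
    exact mul_le_mul_of_nonneg_left
      (Real.rpow_le_rpow hx.1 hx.2 (by linarith)) (by linarith)
  have := Convex.norm_image_sub_le_of_norm_hasDerivWithin_le hderiv hbound
    (convex_Icc 0 K) hb ha
  simpa [Real.norm_eq_abs] using this

end GSSWaux

namespace GSSWaux

lemma ud_univ_le_one (d : ℕ) : ud d Set.univ ≤ 1 := by
  rw [ud, Measure.smul_apply, smul_eq_mul]
  rcases eq_or_ne ((volume : Measure (Ed d)).toSphere Set.univ) 0 with h | h
  · rw [h]; simp
  rcases eq_or_ne ((volume : Measure (Ed d)).toSphere Set.univ) ⊤ with h2 | h2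
  · rw [h2]; simp
  · rw [ENNReal.inv_mul_cancel h h2]

end GSSWaux

open GSSWaux

/-- For `μ, ν ∈ P_p(ℝ^d)`, the map `σ ↦ GSSW_σ^p(μ,ν)` is continuous on
`[0,∞)` (with `σ = 0` giving the unsmoothed sliced Wasserstein distance, since `N_0 = δ_0`). -/
theorem gssw_continuous_in_noise
    (d : ℕ) (hd : 1 ≤ d) (p : ℝ) (hp : 1 ≤ p)
    (μ ν : Measure (Ed d)) [IsProbabilityMeasure μ] [IsProbabilityMeasure ν]
    (hμ : FiniteMomentP p μ) (hν : FiniteMomentP p ν) :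
    ContinuousOn (fun σ : ℝ => GSSWpow p σ μ ν) (Set.Ici 0) := by
  have hp0 : 0 ≤ p := zero_le_one.trans hp
  have hppos : 0 < p := lt_of_lt_of_le one_pos hp
  intro σ0 hσ0
  rw [Set.mem_Ici] at hσ0
  set f : Sph d → ℝ → ℝ≥0∞ :=
    fun u σ => WpPow p (smProj σ u μ) (smProj σ u ν) with hf
  set G : ℝ → ℝ≥0∞ := fun σ => GSSWpow p σ μ ν with hG
  set cp : ℝ≥0∞ := ∫⁻ z, ENNReal.ofReal (|z| ^ p) ∂(gaussR 1) with hcp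
  have hcpne : cp ≠ ⊤ := (cp_lt_top hp).ne
  set c : ℝ≥0∞ := cp ^ (1/p) with hcdef
  have hcne : c ≠ ⊤ := ENNReal.rpow_ne_top_of_nonneg (by positivity) hcpne
  have h2cne : 2 * c ≠ ⊤ := ENNReal.mul_ne_top (by norm_num) hcne
  set B0 : ℝ≥0∞ := ENNReal.ofReal (2 ^ p) * ((∫⁻ x, ENNReal.ofReal (‖x‖ ^ p) ∂μ)
      + ∫⁻ x, ENNReal.ofReal (‖x‖ ^ p) ∂ν) with hB0
  have hB0ne : B0 ≠ ⊤ :=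
    ENNReal.mul_ne_top ENNReal.ofReal_ne_top (ENNReal.add_ne_top.mpr ⟨hμ.ne, hν.ne⟩)
  set T : ℝ := σ0 + 1 with hT
  have hT0 : (0:ℝ) ≤ T := by linarith
  set M : ℝ≥0∞ := (B0 ^ (1/p) + ENNReal.ofReal T * (2 * c)) ^ p with hM
  have hMne : M ≠ ⊤ := by
    refine ENNReal.rpow_ne_top_of_nonneg hp0 (ENNReal.add_ne_top.mpr ⟨?_, ?_⟩)
    · exact ENNReal.rpow_ne_top_of_nonneg (by positivity) hB0ne
    · exact ENNReal.mul_ne_top ENNReal.ofReal_ne_top h2cne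
  have hfM : ∀ (u : Sph d) (σ : ℝ), 0 ≤ σ → σ ≤ T → f u σ ≤ M :=
    fun u σ h1 h2 => f_le_M hp u μ ν h1 h2
  set K : ℝ := (M ^ (1/p)).toReal with hK
  have hMroot_ne : M ^ (1/p) ≠ ⊤ := ENNReal.rpow_ne_top_of_nonneg (by positivity) hMne
  set L : ℝ := p * K ^ (p - 1) * (2 * c).toReal with hL
  have hL0 : 0 ≤ L := by
    refine mul_nonneg (mul_nonneg hp0 ?_) ENNReal.toReal_nonneg
    exact Real.rpow_nonneg ENNReal.toReal_nonneg _
  -- pointwise Lipschitz estimate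
  have glip : ∀ (u : Sph d) (σ τ : ℝ), 0 ≤ σ → σ ≤ T → 0 ≤ τ → τ ≤ T →
      f u σ ≤ f u τ + ENNReal.ofReal (L * |σ - τ|) := by
    intro u σ τ hσ1 hσ2 hτ1 hτ2
    have hfσM : f u σ ≤ M := hfM u σ hσ1 hσ2
    have hfτM : f u τ ≤ M := hfM u τ hτ1 hτ2
    have hfσne : f u σ ≠ ⊤ := (hfσM.trans_lt hMne.lt_top).ne
    have hfτne : f u τ ≠ ⊤ := (hfτM.trans_lt hMne.lt_top).ne
    have hrσne : f u σ ^ (1/p) ≠ ⊤ := ENNReal.rpow_ne_top_of_nonneg (by positivity) hfσne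
    have hrτne : f u τ ^ (1/p) ≠ ⊤ := ENNReal.rpow_ne_top_of_nonneg (by positivity) hfτne
    set e : ℝ≥0∞ := ENNReal.ofReal |σ - τ| * (2 * c) with he
    have hene : e ≠ ⊤ := ENNReal.mul_ne_top ENNReal.ofReal_ne_top h2cne
    have k1 : f u σ ^ (1/p) ≤ f u τ ^ (1/p) + e := key_ineq hp u μ ν hσ1 hτ1
    have k2 : f u τ ^ (1/p) ≤ f u σ ^ (1/p) + e := by
      have := key_ineq hp u μ ν hτ1 hσ1
      rwa [abs_sub_comm] at this
    set a : ℝ := (f u σ ^ (1/p)).toReal with ha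
    set b : ℝ := (f u τ ^ (1/p)).toReal with hb
    have hab1 : a ≤ b + e.toReal := by
      rw [← ENNReal.toReal_add hrτne hene]
      exact ENNReal.toReal_mono (ENNReal.add_ne_top.mpr ⟨hrτne, hene⟩) k1
    have hab2 : b ≤ a + e.toReal := by
      rw [← ENNReal.toReal_add hrσne hene]
      exact ENNReal.toReal_mono (ENNReal.add_ne_top.mpr ⟨hrσne, hene⟩) k2
    have habs : |a - b| ≤ e.toReal := abs_sub_le_iff.mpr ⟨by linarith, by linarith⟩
    have haK : a ∈ Set.Icc (0:ℝ) K :=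
      ⟨ENNReal.toReal_nonneg, ENNReal.toReal_mono hMroot_ne
        (ENNReal.rpow_le_rpow hfσM (by positivity))⟩
    have hbK : b ∈ Set.Icc (0:ℝ) K :=
      ⟨ENNReal.toReal_nonneg, ENNReal.toReal_mono hMroot_ne
        (ENNReal.rpow_le_rpow hfτM (by positivity))⟩
    have hlips := rpow_lipschitz hp ENNReal.toReal_nonneg haK hbK
    have hap : a ^ p = (f u σ).toReal := by
      rw [ha, ENNReal.toReal_rpow, rpow_rpow_inv hp]
    have hbp : b ^ p = (f u τ).toReal := by
      rw [hb, ENNReal.toReal_rpow, rpow_rpow_inv hp]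
    have hetor : e.toReal = |σ - τ| * (2 * c).toReal := by
      rw [he, ENNReal.toReal_mul, ENNReal.toReal_ofReal (abs_nonneg _)]
    have hreal : (f u σ).toReal ≤ (f u τ).toReal + L * |σ - τ| := by
      have h1 : (f u σ).toReal - (f u τ).toReal ≤ |a ^ p - b ^ p| := by
        rw [hap, hbp]; exact (le_abs_self _)
      have h2 : |a ^ p - b ^ p| ≤ p * K ^ (p-1) * e.toReal :=
        hlips.trans (mul_le_mul_of_nonneg_left habs
          (mul_nonneg hp0 (Real.rpow_nonneg ENNReal.toReal_nonneg _)))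
      have h3 : p * K ^ (p-1) * e.toReal = L * |σ - τ| := by
        rw [hetor, hL]; ring
      linarith [h1.trans (h2.trans_eq h3)]
    calc f u σ = ENNReal.ofReal ((f u σ).toReal) := (ENNReal.ofReal_toReal hfσne).symm
      _ ≤ ENNReal.ofReal ((f u τ).toReal + L * |σ - τ|) := ENNReal.ofReal_le_ofReal hreal
      _ = ENNReal.ofReal ((f u τ).toReal) + ENNReal.ofReal (L * |σ - τ|) :=
          ENNReal.ofReal_add ENNReal.toReal_nonneg (by positivity)
      _ = f u τ + ENNReal.ofReal (L * |σ - τ|) := by rw [ENNReal.ofReal_toReal hfτne]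
  -- integrated Lipschitz estimate
  have Gstep : ∀ σ τ : ℝ, 0 ≤ σ → σ ≤ T → 0 ≤ τ → τ ≤ T →
      G σ ≤ G τ + ENNReal.ofReal (L * |σ - τ|) := by
    intro σ τ hσ1 hσ2 hτ1 hτ2
    show GSSWpow p σ μ ν ≤ GSSWpow p τ μ ν + _
    rw [GSSWpow, GSSWpow]
    calc ∫⁻ u, WpPow p (smProj σ u μ) (smProj σ u ν) ∂(ud d)
        ≤ ∫⁻ u, (WpPow p (smProj τ u μ) (smProj τ u ν)
            + ENNReal.ofReal (L * |σ - τ|)) ∂(ud d) :=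
          lintegral_mono fun u => glip u σ τ hσ1 hσ2 hτ1 hτ2
      _ = (∫⁻ u, WpPow p (smProj τ u μ) (smProj τ u ν) ∂(ud d))
            + ENNReal.ofReal (L * |σ - τ|) * (ud d Set.univ) := by
          rw [lintegral_add_right _ measurable_const, lintegral_const]
      _ ≤ (∫⁻ u, WpPow p (smProj τ u μ) (smProj τ u ν) ∂(ud d))
            + ENNReal.ofReal (L * |σ - τ|) := by
          refine add_le_add_right ?_ _
          calc ENNReal.ofReal (L * |σ - τ|) * (ud d Set.univ)
              ≤ ENNReal.ofReal (L * |σ - τ|) * 1 := mul_le_mul_right (ud_univ_le_one d) _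
            _ = _ := mul_one _
  have hGM : ∀ σ : ℝ, 0 ≤ σ → σ ≤ T → G σ ≤ M := by
    intro σ h1 h2
    show GSSWpow p σ μ ν ≤ M
    rw [GSSWpow]
    calc ∫⁻ u, WpPow p (smProj σ u μ) (smProj σ u ν) ∂(ud d)
        ≤ ∫⁻ _, M ∂(ud d) := lintegral_mono fun u => hfM u σ h1 h2
      _ = M * (ud d Set.univ) := lintegral_const M
      _ ≤ M * 1 := mul_le_mul_right (ud_univ_le_one d) _
      _ = M := mul_one M
  have hσ0T : σ0 ≤ T := by rw [hT]; linarith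
  have hG0ne : G σ0 ≠ ⊤ := ((hGM σ0 hσ0 hσ0T).trans_lt hMne.lt_top).ne
  refine (ENNReal.tendsto_nhds hG0ne).mpr ?_
  intro ε hε
  set ε' : ℝ≥0∞ := min ε 1 with hε'
  have hε'ne : ε' ≠ ⊤ := ne_top_of_le_ne_top ENNReal.one_ne_top (min_le_right _ _)
  have hε'0 : ε' ≠ 0 := by
    simp only [hε', ne_eq, min_eq_iff, not_or]
    push_neg
    constructor <;> intro h
    · exact absurd h hε.ne'
    · exact absurd h one_ne_zero
  set r : ℝ := ε'.toReal with hr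
  have hr0 : 0 < r := ENNReal.toReal_pos hε'0 hε'ne
  set δ : ℝ := min 1 (r / (L + 1)) with hδ
  have hδ0 : 0 < δ := lt_min one_pos (by positivity)
  have hbound : ∀ σ : ℝ, 0 ≤ σ → |σ - σ0| < δ → ENNReal.ofReal (L * |σ - σ0|) ≤ ε := by
    intro σ hσ habs
    have h1 : L * |σ - σ0| ≤ r := by
      have h2 : |σ - σ0| ≤ r / (L + 1) := le_of_lt (lt_of_lt_of_le habs (min_le_right _ _))
      calc L * |σ - σ0| ≤ (L + 1) * (r / (L + 1)) :=
            mul_le_mul (by linarith) h2 (abs_nonneg _) (by linarith)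
        _ = r := by field_simp
    calc ENNReal.ofReal (L * |σ - σ0|) ≤ ENNReal.ofReal r := ENNReal.ofReal_le_ofReal h1
      _ = ε' := ENNReal.ofReal_toReal hε'ne
      _ ≤ ε := min_le_left _ _
  have hev1 : ∀ᶠ σ in nhdsWithin σ0 (Set.Ici 0), |σ - σ0| < δ :=
    eventually_nhdsWithin_of_eventually_nhds (eventually_abs_sub_lt σ0 hδ0)
  have hev2 : ∀ᶠ σ in nhdsWithin σ0 (Set.Ici 0), σ ∈ Set.Ici (0:ℝ) :=
    eventually_mem_nhdsWithin
  filter_upwards [hev1, hev2] with σ habs hσmem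
  have hσ1 : (0:ℝ) ≤ σ := hσmem
  have hσ2 : σ ≤ T := by
    have : σ - σ0 < δ := lt_of_abs_lt habs
    have hδ1 : δ ≤ 1 := min_le_left _ _
    rw [hT]; linarith
  constructor
  · -- lower bound
    have := Gstep σ0 σ hσ0 hσ0T hσ1 hσ2
    rw [abs_sub_comm] at this
    refine tsub_le_iff_right.mpr (this.trans ?_)
    exact add_le_add_right (hbound σ hσ1 habs) _
  · -- upper bound
    have := Gstep σ σ0 hσ1 hσ2 hσ0 hσ0T
    exact this.trans (add_le_add_right (hbound σ hσ1 habs) _)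
end
end

section
/- Let k : ℝ × ℝ → ℝ be a bounded measurable kernel and let μ, ν be Borel probability measures on ℝ^d. Define, for probability measures η, ζ on ℝ, MMD²(η,ζ) = ∬ k(t,t') dη(t)dη(t') − 2∬ k(t,r) dη(t)dζ(r) + ∬ k(r,r') dζ(r)dζ(r'), and the Gaussian-smoothed sliced squared MMD by GS-MMD²_σ(μ,ν) = ∫_{S^{d-1}} MMD²(R_u μ * N_σ, R_u ν * N_σ) du_d(u). Then the map σ ↦ GS-MMD²_σ(μ,ν) is continuous on (0,∞). -/
open MeasureTheory ProbabilityTheory Metric Filter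
open scoped ENNReal NNReal

noncomputable section

/-- The squared maximum mean discrepancy associated with a kernel k on ℝ. -/
def MMD2 (k : ℝ → ℝ → ℝ) (η ζ : Measure ℝ) : ℝ :=
  (∫ t, ∫ t', k t t' ∂η ∂η) - 2 * (∫ t, ∫ r, k t r ∂ζ ∂η) + (∫ r, ∫ r', k r r' ∂ζ ∂ζ)

namespace GSMMD
open Real
def phi (σ : ℝ) (z : ℝ) : ℝ := gaussianPDFReal 0 (σ.toNNReal ^ 2) z
lemma phi_nonneg (σ z : ℝ) : 0 ≤ phi σ z := gaussianPDFReal_nonneg _ _ _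
lemma measurable_phi (σ : ℝ) : Measurable (phi σ) := measurable_gaussianPDFReal _ _
lemma integrable_phi (σ : ℝ) : Integrable (phi σ) := integrable_gaussianPDFReal _ _
lemma integral_phi {σ : ℝ} (hσ : 0 < σ) : ∫ z, phi σ z = 1 := by
  apply integral_gaussianPDFReal_eq_one
  have : σ.toNNReal ≠ 0 := by simp [Real.toNNReal_eq_zero]; linarith
  positivity

def gg (k : ℝ → ℝ → ℝ) (σ s t : ℝ) : ℝ :=
  ∫ p : ℝ × ℝ, phi σ p.1 * (phi σ p.2 * k (s + p.1) (t + p.2)) ∂((volume : Measure ℝ).prod volume)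

lemma measurable_gg_integrand (hk : Measurable (Function.uncurry k)) (σ : ℝ) :
    Measurable (fun q : (ℝ × ℝ) × ℝ × ℝ =>
      phi σ q.2.1 * (phi σ q.2.2 * k (q.1.1 + q.2.1) (q.1.2 + q.2.2))) := by
  exact ((measurable_phi σ).comp (measurable_snd.fst)).mul
    (((measurable_phi σ).comp (measurable_snd.snd)).mul
      (hk.comp ((measurable_fst.fst.add measurable_snd.fst).prodMk
        (measurable_fst.snd.add measurable_snd.snd))))

lemma measurable_gg_integrand' (hk : Measurable (Function.uncurry k)) (σ s t : ℝ) :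
    Measurable (fun p : ℝ × ℝ => phi σ p.1 * (phi σ p.2 * k (s + p.1) (t + p.2))) :=
  ((measurable_phi σ).comp measurable_fst).mul
    (((measurable_phi σ).comp measurable_snd).mul
      (hk.comp ((measurable_fst.const_add s).prodMk (measurable_snd.const_add t))))

lemma stronglyMeasurable_gg (hk : Measurable (Function.uncurry k)) (σ : ℝ) :
    StronglyMeasurable (fun st : ℝ × ℝ => gg k σ st.1 st.2) :=
  StronglyMeasurable.integral_prod_right'
    (f := fun q : (ℝ × ℝ) × ℝ × ℝ =>
      phi σ q.2.1 * (phi σ q.2.2 * k (q.1.1 + q.2.1) (q.1.2 + q.2.2)))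
    (measurable_gg_integrand hk σ).stronglyMeasurable

lemma integrable_gg_integrand (hk : Measurable (Function.uncurry k)) {C : ℝ}
    (hbd : ∀ t t', |k t t'| ≤ C) (σ s t : ℝ) :
    Integrable (fun p : ℝ × ℝ => phi σ p.1 * (phi σ p.2 * k (s + p.1) (t + p.2)))
      ((volume : Measure ℝ).prod volume) := by
  apply Integrable.mono' (g := fun p : ℝ × ℝ => phi σ p.1 * (phi σ p.2 * C))
  · exact (integrable_phi σ).mul_prod ((integrable_phi σ).mul_const C)
  · exact (measurable_gg_integrand' hk σ s t).aestronglyMeasurable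
  · refine .of_forall fun p => ?_
    rw [Real.norm_eq_abs, abs_mul, abs_mul, abs_of_nonneg (phi_nonneg _ _),
      abs_of_nonneg (phi_nonneg _ _)]
    exact mul_le_mul_of_nonneg_left
      (mul_le_mul_of_nonneg_left (hbd _ _) (phi_nonneg _ _)) (phi_nonneg _ _)

lemma abs_gg_le (hk : Measurable (Function.uncurry k)) {C : ℝ}
    (hbd : ∀ t t', |k t t'| ≤ C) {σ : ℝ} (hσ : 0 < σ) (s t : ℝ) :
    |gg k σ s t| ≤ C := by
  have h1 : |gg k σ s t| ≤ ∫ p : ℝ × ℝ, phi σ p.1 * (phi σ p.2 * C)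
      ∂((volume : Measure ℝ).prod volume) := by
    rw [← Real.norm_eq_abs]
    apply norm_integral_le_of_norm_le
      ((integrable_phi σ).mul_prod ((integrable_phi σ).mul_const C))
    refine .of_forall fun p => ?_
    rw [Real.norm_eq_abs, abs_mul, abs_mul, abs_of_nonneg (phi_nonneg _ _),
      abs_of_nonneg (phi_nonneg _ _)]
    exact mul_le_mul_of_nonneg_left
      (mul_le_mul_of_nonneg_left (hbd _ _) (phi_nonneg _ _)) (phi_nonneg _ _)
  have h2 : ∫ p : ℝ × ℝ, phi σ p.1 * (phi σ p.2 * C)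
      ∂((volume : Measure ℝ).prod volume) = C := by
    rw [integral_prod_mul (f := phi σ) (g := fun w => phi σ w * C), integral_mul_const,
      integral_phi hσ]
    ring
  linarith

lemma continuousAt_phi {σ₀ : ℝ} (hσ₀ : 0 < σ₀) (z : ℝ) :
    ContinuousAt (fun σ => phi σ z) σ₀ := by
  unfold phi gaussianPDFReal
  simp only [NNReal.coe_pow, Real.coe_toNNReal']
  have hm : ContinuousAt (fun σ : ℝ => max σ 0) σ₀ := (continuous_id.max continuous_const).continuousAt
  have hmv : max σ₀ 0 = σ₀ := max_eq_left hσ₀.le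
  have hv : ContinuousAt (fun σ : ℝ => 2 * π * max σ 0 ^ 2) σ₀ :=
    continuousAt_const.mul (hm.pow 2)
  apply ContinuousAt.mul
  · apply ContinuousAt.inv₀ (Real.continuous_sqrt.continuousAt.comp hv)
    simp only [Function.comp_apply, hmv]
    positivity
  · apply Real.continuous_exp.continuousAt.comp
    apply ContinuousAt.div continuousAt_const (continuousAt_const.mul (hm.pow 2))
    simp only [Pi.mul_apply, Pi.pow_apply, hmv]
    positivity

lemma phi_le {σ₀ : ℝ} (hσ₀ : 0 < σ₀) {σ : ℝ} (hσ : σ ∈ Set.Ioo (σ₀ / 2) (2 * σ₀)) (z : ℝ) :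
    phi σ z ≤ (√(2 * π * (σ₀ / 2) ^ 2))⁻¹ * rexp (-(1 / (2 * (2 * σ₀) ^ 2)) * z ^ 2) := by
  have hσpos : 0 < σ := lt_trans (by positivity) hσ.1
  unfold phi gaussianPDFReal
  simp only [NNReal.coe_pow, Real.coe_toNNReal', max_eq_left hσpos.le, sub_zero]
  apply mul_le_mul _ _ (le_of_lt (exp_pos _)) (by positivity)
  · apply inv_anti₀ (by positivity)
    apply Real.sqrt_le_sqrt
    have h : (σ₀ / 2) ^ 2 ≤ σ ^ 2 := by nlinarith [hσ.1, hσ₀]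
    nlinarith [Real.pi_pos, h]
  · apply Real.exp_le_exp.mpr
    have h1 : z ^ 2 / (2 * (2 * σ₀) ^ 2) ≤ z ^ 2 / (2 * σ ^ 2) := by
      apply div_le_div_of_nonneg_left (by positivity) (by positivity)
      nlinarith [hσ.2]
    have : -(1 / (2 * (2 * σ₀) ^ 2)) * z ^ 2 = -(z ^ 2 / (2 * (2 * σ₀) ^ 2)) := by ring
    rw [this, neg_div]
    linarith

lemma continuousAt_gg (hk : Measurable (Function.uncurry k)) {C : ℝ}
    (hbd : ∀ t t', |k t t'| ≤ C) {σ₀ : ℝ} (hσ₀ : 0 < σ₀) (s t : ℝ) :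
    ContinuousAt (fun σ => gg k σ s t) σ₀ := by
  have hC : 0 ≤ C := le_trans (abs_nonneg _) (hbd 0 0)
  set ψ : ℝ → ℝ := fun z => (√(2 * π * (σ₀ / 2) ^ 2))⁻¹ *
    rexp (-(1 / (2 * (2 * σ₀) ^ 2)) * z ^ 2) with hψ
  have hψ_nonneg : ∀ z, 0 ≤ ψ z := fun z => by positivity
  have hψ_int : Integrable ψ := by
    apply Integrable.const_mul
    exact integrable_exp_neg_mul_sq (by positivity)
  unfold gg
  apply continuousAt_of_dominated (bound := fun p : ℝ × ℝ => ψ p.1 * (ψ p.2 * C))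
  · exact .of_forall fun σ => (measurable_gg_integrand' hk σ s t).aestronglyMeasurable
  · filter_upwards [Ioo_mem_nhds (show σ₀ / 2 < σ₀ by linarith) (show σ₀ < 2 * σ₀ by linarith)]
      with σ hσ
    refine .of_forall fun p => ?_
    rw [Real.norm_eq_abs, abs_mul, abs_mul, abs_of_nonneg (phi_nonneg _ _),
      abs_of_nonneg (phi_nonneg _ _)]
    apply mul_le_mul (phi_le hσ₀ hσ _) _
      (mul_nonneg (phi_nonneg _ _) (abs_nonneg _)) (hψ_nonneg _)
    exact mul_le_mul (phi_le hσ₀ hσ _) (hbd _ _) (abs_nonneg _) (hψ_nonneg _)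
  · exact hψ_int.mul_prod (hψ_int.mul_const C)
  · refine .of_forall fun p => ?_
    exact (continuousAt_phi hσ₀ _).mul ((continuousAt_phi hσ₀ _).mul continuousAt_const)
variable {k : ℝ → ℝ → ℝ}

lemma gaussR_eq {σ : ℝ} (hσ : 0 < σ) :
    gaussR σ = volume.withDensity (fun z => ((phi σ z).toNNReal : ℝ≥0∞)) := by
  have hv : (σ.toNNReal ^ 2 : ℝ≥0) ≠ 0 := by
    have : σ.toNNReal ≠ 0 := by simp [Real.toNNReal_eq_zero]; linarith
    positivity
  rw [gaussR, gaussianReal_of_var_ne_zero _ hv]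
  rfl

lemma integral_gaussR {σ : ℝ} (hσ : 0 < σ) (g : ℝ → ℝ) :
    ∫ z, g z ∂(gaussR σ) = ∫ z, phi σ z * g z := by
  rw [gaussR_eq hσ, integral_withDensity_eq_integral_smul
    (f := fun z => (phi σ z).toNNReal) ((measurable_phi σ).real_toNNReal) g]
  congr 1; funext z
  simp [NNReal.smul_def, Real.coe_toNNReal _ (phi_nonneg σ z)]

lemma integrable_of_bdd {α : Type*} [MeasurableSpace α] {m : Measure α} [IsFiniteMeasure m]
    {f : α → ℝ} (hf : AEStronglyMeasurable f m) {C : ℝ} (h : ∀ x, |f x| ≤ C) :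
    Integrable f m :=
  ⟨hf, HasFiniteIntegral.of_bounded (C := C) (.of_forall (by simpa using h))⟩

lemma abs_integral_le {α : Type*} [MeasurableSpace α] {m : Measure α} [IsProbabilityMeasure m]
    {f : α → ℝ} {C : ℝ} (h : ∀ x, |f x| ≤ C) : |∫ x, f x ∂m| ≤ C := by
  have := norm_integral_le_of_norm_le_const (μ := m) (f := f) (C := C)
    (.of_forall (by simpa using h))
  simpa using this

lemma convR_integral {η ζ : Measure ℝ} [IsProbabilityMeasure η] [IsProbabilityMeasure ζ]
    {f : ℝ → ℝ} (hf : Measurable f) {C : ℝ} (hbd : ∀ x, |f x| ≤ C) :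
    ∫ x, f x ∂(convR η ζ) = ∫ s, ∫ z, f (s + z) ∂ζ ∂η := by
  rw [convR, integral_map (φ := fun p : ℝ × ℝ => p.1 + p.2) (measurable_fst.add measurable_snd).aemeasurable
    hf.stronglyMeasurable.aestronglyMeasurable]
  exact integral_prod _ (integrable_of_bdd
    ((hf.comp (measurable_fst.add measurable_snd)).aestronglyMeasurable)
    (fun p => hbd _))

lemma gauss_gauss_eq (hk : Measurable (Function.uncurry k)) {C : ℝ}
    (hbd : ∀ t t', |k t t'| ≤ C) {σ : ℝ} (hσ : 0 < σ) (s y : ℝ) :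
    ∫ z, (∫ w, k (s + z) (y + w) ∂(gaussR σ)) ∂(gaussR σ) = gg k σ s y := by
  rw [integral_gaussR hσ]
  have h1 : ∀ z : ℝ, ∫ w, k (s + z) (y + w) ∂(gaussR σ)
      = ∫ w, phi σ w * k (s + z) (y + w) := fun z => integral_gaussR hσ _
  rw [gg, integral_prod _ (integrable_gg_integrand hk hbd σ s y)]
  refine integral_congr_ae (.of_forall fun z => ?_)
  show phi σ z * (∫ w, k (s + z) (y + w) ∂(gaussR σ))
    = ∫ w, phi σ z * (phi σ w * k (s + z) (y + w))
  rw [h1 z, ← integral_const_mul]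

lemma mmd_term_eq {η ζ : Measure ℝ} [IsProbabilityMeasure η] [IsProbabilityMeasure ζ]
    (hk : Measurable (Function.uncurry k)) {C : ℝ}
    (hbd : ∀ t t', |k t t'| ≤ C) {σ : ℝ} (hσ : 0 < σ) :
    ∫ t, ∫ r, k t r ∂(convR ζ (gaussR σ)) ∂(convR η (gaussR σ))
      = ∫ s, ∫ t, gg k σ s t ∂ζ ∂η := by
  set G := gaussR σ with hG
  -- inner function after expanding the inner convolution
  set f1 : ℝ × ℝ → ℝ := fun q => ∫ w, k q.1 (q.2 + w) ∂G with hf1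
  have hf1m : StronglyMeasurable f1 := by
    apply StronglyMeasurable.integral_prod_right'
      (f := fun q : (ℝ × ℝ) × ℝ => k q.1.1 (q.1.2 + q.2))
    exact (hk.comp (measurable_fst.fst.prodMk
      (measurable_fst.snd.add measurable_snd))).stronglyMeasurable
  have hf1bd : ∀ q, |f1 q| ≤ C := fun q => abs_integral_le (fun w => hbd _ _)
  set F : ℝ → ℝ := fun t => ∫ y, f1 (t, y) ∂ζ with hF
  have hFm : StronglyMeasurable F := hf1m.integral_prod_right'
  have hFbd : ∀ t, |F t| ≤ C := fun t => abs_integral_le (fun y => hf1bd _)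
  have step1 : ∀ t : ℝ, ∫ r, k t r ∂(convR ζ G) = F t := by
    intro t
    exact convR_integral (hk.comp measurable_prodMk_left) (hbd t)
  calc ∫ t, ∫ r, k t r ∂(convR ζ G) ∂(convR η G)
      = ∫ t, F t ∂(convR η G) := by
        exact integral_congr_ae (.of_forall step1)
    _ = ∫ s, ∫ z, F (s + z) ∂G ∂η := convR_integral hFm.measurable hFbd
    _ = ∫ s, ∫ t, gg k σ s t ∂ζ ∂η := by
        refine integral_congr_ae (.of_forall fun s => ?_)
        have swap : ∫ z, ∫ y, f1 (s + z, y) ∂ζ ∂G = ∫ y, ∫ z, f1 (s + z, y) ∂G ∂ζ := by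
          apply integral_integral_swap
          apply integrable_of_bdd (C := C)
          · exact (hf1m.comp_measurable
              ((measurable_fst.const_add s).prodMk measurable_snd)).aestronglyMeasurable
          · exact fun p => hf1bd _
        show (∫ z, F (s + z) ∂G) = ∫ t, gg k σ s t ∂ζ
        have hrfl : (∫ z, F (s + z) ∂G) = ∫ z, ∫ y, f1 (s + z, y) ∂ζ ∂G := rfl
        rw [hrfl, swap]
        refine integral_congr_ae (.of_forall fun y => ?_)
        have : ∀ z : ℝ, f1 (s + z, y) = ∫ w, k (s + z) (y + w) ∂G := fun z => rfl
        simp_rw [this]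
        exact gauss_gauss_eq hk hbd hσ s y
end GSMMD



namespace GSMMD

lemma measurable_innerPair {d : ℕ} (u : Sph d) :
    Measurable (fun q : Ed d × Ed d =>
      ((inner ℝ (u : Ed d) q.1 : ℝ), (inner ℝ (u : Ed d) q.2 : ℝ))) :=
  ((Continuous.inner continuous_const continuous_fst).prodMk
    (Continuous.inner continuous_const continuous_snd)).measurable

lemma smProj_term_eq {k : ℝ → ℝ → ℝ} (hk : Measurable (Function.uncurry k)) {C : ℝ}
    (hbd : ∀ t t', |k t t'| ≤ C) {σ : ℝ} (hσ : 0 < σ) {d : ℕ} (u : Sph d)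
    (α β : Measure (Ed d)) [IsProbabilityMeasure α] [IsProbabilityMeasure β] :
    ∫ t, ∫ r, k t r ∂(smProj σ u β) ∂(smProj σ u α)
      = ∫ q, gg k σ (inner ℝ (u : Ed d) q.1 : ℝ) (inner ℝ (u : Ed d) q.2 : ℝ) ∂(α.prod β) := by
  have hin : Measurable fun x : Ed d => (inner ℝ (u : Ed d) x : ℝ) :=
    (Continuous.inner continuous_const continuous_id).measurable
  haveI : IsProbabilityMeasure (radonProj u α) := Measure.isProbabilityMeasure_map hin.aemeasurable
  haveI : IsProbabilityMeasure (radonProj u β) := Measure.isProbabilityMeasure_map hin.aemeasurable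
  rw [smProj, smProj, mmd_term_eq hk hbd hσ]
  rw [radonProj, radonProj]
  rw [integral_map hin.aemeasurable
    ((stronglyMeasurable_gg hk σ).integral_prod_right').aestronglyMeasurable]
  have hinner : ∀ x : Ed d,
      ∫ t, gg k σ (inner ℝ (u : Ed d) x : ℝ) t
        ∂(Measure.map (fun y : Ed d => (inner ℝ (u : Ed d) y : ℝ)) β)
      = ∫ y, gg k σ (inner ℝ (u : Ed d) x : ℝ) (inner ℝ (u : Ed d) y : ℝ) ∂β := fun x =>
    integral_map hin.aemeasurable
      ((stronglyMeasurable_gg hk σ).comp_measurable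
        measurable_prodMk_left).aestronglyMeasurable
  rw [integral_congr_ae (.of_forall fun x => hinner x)]
  exact (integral_prod _ (integrable_of_bdd
    ((stronglyMeasurable_gg hk σ).comp_measurable (measurable_innerPair u)).aestronglyMeasurable
    (fun q => abs_gg_le hk hbd hσ _ _))).symm

lemma stronglyMeasurable_Tp {k : ℝ → ℝ → ℝ} (hk : Measurable (Function.uncurry k))
    (σ : ℝ) {d : ℕ} (α β : Measure (Ed d)) [IsProbabilityMeasure α] [IsProbabilityMeasure β] :
    StronglyMeasurable (fun u : Sph d =>
      ∫ q, gg k σ (inner ℝ (u : Ed d) q.1 : ℝ) (inner ℝ (u : Ed d) q.2 : ℝ) ∂(α.prod β)) := by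
  apply StronglyMeasurable.integral_prod_right'
    (f := fun p : Sph d × (Ed d × Ed d) =>
      gg k σ (inner ℝ (p.1 : Ed d) p.2.1 : ℝ) (inner ℝ (p.1 : Ed d) p.2.2 : ℝ))
  have hrfl : (fun p : Sph d × (Ed d × Ed d) =>
      gg k σ (inner ℝ (p.1 : Ed d) p.2.1 : ℝ) (inner ℝ (p.1 : Ed d) p.2.2 : ℝ))
      = (fun st : ℝ × ℝ => gg k σ st.1 st.2) ∘ (fun p : Sph d × (Ed d × Ed d) =>
        ((inner ℝ (p.1 : Ed d) p.2.1 : ℝ), (inner ℝ (p.1 : Ed d) p.2.2 : ℝ))) := rfl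
  rw [hrfl]
  apply (stronglyMeasurable_gg hk σ).comp_measurable
  have hInner2 : Measurable fun q : Ed d × Ed d => (inner ℝ q.1 q.2 : ℝ) :=
    (continuous_fst.inner continuous_snd).measurable
  have h1 : Measurable fun p : Ed d × (Ed d × Ed d) =>
      ((inner ℝ p.1 p.2.1 : ℝ), (inner ℝ p.1 p.2.2 : ℝ)) :=
    (hInner2.comp (measurable_fst.prodMk (measurable_fst.comp measurable_snd))).prodMk
      (hInner2.comp (measurable_fst.prodMk (measurable_snd.comp measurable_snd)))
  have h2 : Measurable fun p : Sph d × (Ed d × Ed d) => ((p.1 : Ed d), p.2) :=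
    (measurable_subtype_coe.comp measurable_fst).prodMk measurable_snd
  exact h1.comp h2

lemma continuousAt_Tp {k : ℝ → ℝ → ℝ} (hk : Measurable (Function.uncurry k)) {C : ℝ}
    (hbd : ∀ t t', |k t t'| ≤ C) {σ₀ : ℝ} (hσ₀ : 0 < σ₀) {d : ℕ} (u : Sph d)
    (α β : Measure (Ed d)) [IsProbabilityMeasure α] [IsProbabilityMeasure β] :
    ContinuousAt (fun σ : ℝ =>
      ∫ q, gg k σ (inner ℝ (u : Ed d) q.1 : ℝ) (inner ℝ (u : Ed d) q.2 : ℝ) ∂(α.prod β)) σ₀ := by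
  apply continuousAt_of_dominated (bound := fun _ => C)
  · exact .of_forall fun σ => ((stronglyMeasurable_gg hk σ).comp_measurable
      (measurable_innerPair u)).aestronglyMeasurable
  · filter_upwards [Ioi_mem_nhds hσ₀] with σ hσ
    exact .of_forall fun q => by
      simpa using abs_gg_le hk hbd hσ (inner ℝ (u : Ed d) q.1 : ℝ) (inner ℝ (u : Ed d) q.2 : ℝ)
  · exact integrable_const C
  · exact .of_forall fun q => continuousAt_gg hk hbd hσ₀ _ _

lemma abs_Tp_le {k : ℝ → ℝ → ℝ} (hk : Measurable (Function.uncurry k)) {C : ℝ}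
    (hbd : ∀ t t', |k t t'| ≤ C) {σ : ℝ} (hσ : 0 < σ) {d : ℕ} (u : Sph d)
    (α β : Measure (Ed d)) [IsProbabilityMeasure α] [IsProbabilityMeasure β] :
    |∫ q, gg k σ (inner ℝ (u : Ed d) q.1 : ℝ) (inner ℝ (u : Ed d) q.2 : ℝ) ∂(α.prod β)| ≤ C :=
  abs_integral_le fun q => abs_gg_le hk hbd hσ _ _

instance (d : ℕ) : IsFiniteMeasure (ud d) := by
  constructor
  rw [ud, Measure.smul_apply, smul_eq_mul]
  exact lt_of_le_of_lt (ENNReal.inv_mul_le_one _) ENNReal.one_lt_top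

end GSMMD

/-- For a bounded measurable kernel k, the Gaussian-smoothed sliced
squared MMD, `σ ↦ ∫_{S^{d-1}} MMD²(R_u μ * N_σ, R_u ν * N_σ) du_d(u)`, is continuous
on (0,∞). -/

theorem gs_mmd_continuous_in_noise
    (d : ℕ) (hd : 1 ≤ d) (k : ℝ → ℝ → ℝ)
    (hk : Measurable (Function.uncurry k))
    (hbd : ∃ C : ℝ, ∀ t t' : ℝ, |k t t'| ≤ C)
    (μ ν : Measure (Ed d)) [IsProbabilityMeasure μ] [IsProbabilityMeasure ν] :
    ContinuousOn (fun σ : ℝ => ∫ u, MMD2 k (smProj σ u μ) (smProj σ u ν) ∂(ud d))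
      (Set.Ioi 0) := by
  classical
  obtain ⟨C, hC⟩ := hbd
  -- H σ u is the expression of the integrand valid for σ > 0
  set Tp : ℝ → Sph d → Measure (Ed d) → Measure (Ed d) → ℝ :=
    fun σ u α β =>
      ∫ q, GSMMD.gg k σ (inner ℝ (u : Ed d) q.1 : ℝ) (inner ℝ (u : Ed d) q.2 : ℝ) ∂(α.prod β)
    with hTp
  set H : ℝ → Sph d → ℝ := fun σ u =>
    Tp σ u μ μ - 2 * Tp σ u μ ν + Tp σ u ν ν with hH
  have hMMD : ∀ σ ∈ Set.Ioi (0 : ℝ), ∀ u : Sph d,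
      MMD2 k (smProj σ u μ) (smProj σ u ν) = H σ u := by
    intro σ hσ u
    rw [MMD2, hH, hTp]
    rw [GSMMD.smProj_term_eq hk hC hσ u μ μ, GSMMD.smProj_term_eq hk hC hσ u μ ν,
      GSMMD.smProj_term_eq hk hC hσ u ν ν]
  intro σ₀ hσ₀
  have hσ₀' : (0 : ℝ) < σ₀ := hσ₀
  apply ContinuousAt.continuousWithinAt
  have hcont : ContinuousAt (fun σ : ℝ => ∫ u, H σ u ∂(ud d)) σ₀ := by
    apply continuousAt_of_dominated (bound := fun _ => C + 2 * C + C)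
    · refine .of_forall fun σ => ?_
      apply AEStronglyMeasurable.add
      apply AEStronglyMeasurable.sub
      · exact (GSMMD.stronglyMeasurable_Tp hk σ μ μ).aestronglyMeasurable
      · exact ((GSMMD.stronglyMeasurable_Tp hk σ μ ν).const_mul 2).aestronglyMeasurable
      · exact (GSMMD.stronglyMeasurable_Tp hk σ ν ν).aestronglyMeasurable
    · filter_upwards [Ioi_mem_nhds hσ₀'] with σ hσ
      refine .of_forall fun u => ?_
      rw [Real.norm_eq_abs, hH]
      have h1 := GSMMD.abs_Tp_le hk hC hσ u μ μ
      have h2 := GSMMD.abs_Tp_le hk hC hσ u μ ν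
      have h3 := GSMMD.abs_Tp_le hk hC hσ u ν ν
      have := abs_add_le (Tp σ u μ μ - 2 * Tp σ u μ ν) (Tp σ u ν ν)
      have := abs_sub (Tp σ u μ μ) (2 * Tp σ u μ ν)
      have habs2 : |2 * Tp σ u μ ν| = 2 * |Tp σ u μ ν| := by
        rw [abs_mul]; norm_num
      cases abs_cases (Tp σ u μ μ - 2 * Tp σ u μ ν + Tp σ u ν ν) with
      | inl h => cases abs_cases (Tp σ u μ μ) with
        | inl h1' => nlinarith [abs_nonneg (Tp σ u μ ν), abs_le.mp h1, abs_le.mp h2, abs_le.mp h3]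
        | inr h1' => nlinarith [abs_le.mp h1, abs_le.mp h2, abs_le.mp h3]
      | inr h => nlinarith [abs_le.mp h1, abs_le.mp h2, abs_le.mp h3]
    · exact integrable_const _
    · refine .of_forall fun u => ?_
      apply ContinuousAt.add
      apply ContinuousAt.sub
      · exact GSMMD.continuousAt_Tp hk hC hσ₀' u μ μ
      · exact (GSMMD.continuousAt_Tp hk hC hσ₀' u μ ν).const_mul 2
      · exact GSMMD.continuousAt_Tp hk hC hσ₀' u ν ν
  apply hcont.congr
  filter_upwards [Ioi_mem_nhds hσ₀'] with σ hσ
  exact (integral_congr_ae (.of_forall fun u => hMMD σ hσ u)).symm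
end
end

section
/- Let p ≥ 1 and let η, ζ be Borel probability measures on ℝ with finite p-th moments that are absolutely continuous with respect to Lebesgue measure, with densities f and g respectively. Then W_p(η,ζ)^p ≤ 2^{p−1} ∫_ℝ |t|^p |f(t) − g(t)| dt. -/
open MeasureTheory ProbabilityTheory Metric Filter
open scoped ENNReal NNReal

noncomputable section

/-- If `η, ζ` are probability measures on ℝ with finite p-th moments and
Lebesgue densities `f, g`, then `W_p(η,ζ)^p ≤ 2^{p−1} ∫ |t|^p |f(t) − g(t)| dt`. -/
theorem wasserstein_le_weighted_tv
    (p : ℝ) (hp : 1 ≤ p)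
    (f g : ℝ → ℝ) (hfm : Measurable f) (hgm : Measurable g)
    (hf0 : ∀ t, 0 ≤ f t) (hg0 : ∀ t, 0 ≤ g t)
    (η ζ : Measure ℝ)
    (hη : η = volume.withDensity fun t => ENNReal.ofReal (f t))
    (hζ : ζ = volume.withDensity fun t => ENNReal.ofReal (g t))
    [IsProbabilityMeasure η] [IsProbabilityMeasure ζ]
    (hηmom : ∫⁻ t, ENNReal.ofReal (|t| ^ p) ∂η < ⊤)
    (hζmom : ∫⁻ t, ENNReal.ofReal (|t| ^ p) ∂ζ < ⊤) :
    WpPow p η ζ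
      ≤ ENNReal.ofReal ((2 : ℝ) ^ (p - 1))
        * ∫⁻ t, ENNReal.ofReal (|t| ^ p * |f t - g t|) := by
    classical
  have hp0 : (0:ℝ) < p := lt_of_lt_of_le one_pos hp
  -- notation
  set F : ℝ → ℝ≥0∞ := fun t => ENNReal.ofReal (f t) with hFdef
  set G : ℝ → ℝ≥0∞ := fun t => ENNReal.ofReal (g t) with hGdef
  have hFm : Measurable F := hfm.ennreal_ofReal
  have hGm : Measurable G := hgm.ennreal_ofReal
  set h : ℝ → ℝ≥0∞ := fun t => min (F t) (G t) with hhdef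
  set fp : ℝ → ℝ≥0∞ := fun t => F t - G t with hfpdef
  set fm : ℝ → ℝ≥0∞ := fun t => G t - F t with hfmdef
  have hhm : Measurable h := hFm.min hGm
  have hfpm : Measurable fp := hFm.sub hGm
  have hfmm : Measurable fm := hGm.sub hFm
  have hFdec : (fun t => h t + fp t) = F := by
    funext t
    rcases le_total (F t) (G t) with hle | hle
    · simp [h, fp, min_eq_left hle, tsub_eq_zero_of_le hle]
    · simp only [h, fp, min_eq_right hle]
      rw [add_comm]; exact tsub_add_cancel_of_le hle
  have hGdec : (fun t => h t + fm t) = G := by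
    funext t
    rcases le_total (G t) (F t) with hle | hle
    · simp [h, fm, min_eq_right hle, tsub_eq_zero_of_le hle]
    · simp only [h, fm, min_eq_left hle]
      rw [add_comm]; exact tsub_add_cancel_of_le hle
  set ν : Measure ℝ := volume.withDensity h with hνdef
  set μp : Measure ℝ := volume.withDensity fp with hμpdef
  set μn : Measure ℝ := volume.withDensity fm with hμndef
  have hηsum : η = ν + μp := by
    rw [hη, ← hFdec]
    exact (withDensity_add_left hhm fp)
  have hζsum : ζ = ν + μn := by
    rw [hζ, ← hGdec]
    exact (withDensity_add_left hhm fm)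
  have hν_le : ν Set.univ ≤ 1 := by
    have := measure_univ (μ := η)
    rw [hηsum] at this
    simp only [Measure.add_apply] at this
    calc ν Set.univ ≤ ν Set.univ + μp Set.univ := le_self_add
    _ = 1 := this
  have hν_ne_top : ν Set.univ ≠ ⊤ := (lt_of_le_of_lt hν_le ENNReal.one_lt_top).ne
  set m : ℝ≥0∞ := μp Set.univ with hmdef
  have hsum1 : ν Set.univ + m = 1 := by
    have := measure_univ (μ := η)
    rw [hηsum] at this; simpa using this
  have hsum2 : ν Set.univ + μn Set.univ = 1 := by
    have := measure_univ (μ := ζ)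
    rw [hζsum] at this; simpa using this
  have hmm : μn Set.univ = m := by
    have : ν Set.univ + μn Set.univ = ν Set.univ + m := by rw [hsum2, hsum1]
    exact (ENNReal.add_right_inj hν_ne_top).mp this
  have hm_le : m ≤ 1 := by
    calc m ≤ ν Set.univ + m := le_add_self
    _ = 1 := hsum1
  have hm_ne_top : m ≠ ⊤ := (lt_of_le_of_lt hm_le ENNReal.one_lt_top).ne
  haveI : IsFiniteMeasure μp := ⟨lt_of_le_of_lt hm_le ENNReal.one_lt_top⟩
  haveI : IsFiniteMeasure μn := ⟨by rw [hmm]; exact lt_of_le_of_lt hm_le ENNReal.one_lt_top⟩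
  -- the cost function
  have hcostm : Measurable fun q : ℝ × ℝ => ENNReal.ofReal (|q.1 - q.2| ^ p) :=
    (((measurable_fst.sub measurable_snd).abs).pow_const p).ennreal_ofReal
  by_cases hm0 : m = 0
  · -- η = ζ ; use the diagonal coupling
    have hμp0 : μp = 0 := Measure.measure_univ_eq_zero.mp hm0
    have hμn0 : μn = 0 := Measure.measure_univ_eq_zero.mp (by rw [hmm]; exact hm0)
    have hηζ : η = ζ := by rw [hηsum, hζsum, hμp0, hμn0]
    set γ : Measure (ℝ × ℝ) := η.map (fun x => (x, x)) with hγdef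
    have hdiagm : Measurable fun x : ℝ => (x, x) := measurable_id.prodMk measurable_id
    have h1 : γ.map Prod.fst = η := by
      rw [hγdef, Measure.map_map measurable_fst hdiagm]
      exact Measure.map_id
    have h2 : γ.map Prod.snd = ζ := by
      rw [hγdef, Measure.map_map measurable_snd hdiagm, ← hηζ]
      exact Measure.map_id
    refine le_trans (iInf₂_le γ ⟨h1, h2⟩) ?_
    have : ∫⁻ q, ENNReal.ofReal (|q.1 - q.2| ^ p) ∂γ = 0 := by
      rw [hγdef, lintegral_map hcostm hdiagm]
      simp [Real.zero_rpow hp0.ne']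
    rw [this]; exact zero_le
  · -- main case
    set γ : Measure (ℝ × ℝ) := ν.map (fun x => (x, x)) + m⁻¹ • (μp.prod μn) with hγdef
    have hdiagm : Measurable fun x : ℝ => (x, x) := measurable_id.prodMk measurable_id
    have h1 : γ.map Prod.fst = η := by
      rw [hγdef, Measure.map_add _ _ measurable_fst, Measure.map_smul,
        Measure.map_map measurable_fst hdiagm, Measure.map_fst_prod, hmm,
        smul_smul, ENNReal.inv_mul_cancel hm0 hm_ne_top, one_smul, hηsum]
      congr 1
      exact Measure.map_id
    have h2 : γ.map Prod.snd = ζ := by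
      rw [hγdef, Measure.map_add _ _ measurable_snd, Measure.map_smul,
        Measure.map_map measurable_snd hdiagm, Measure.map_snd_prod, ← hmdef,
        smul_smul, ENNReal.inv_mul_cancel hm0 hm_ne_top, one_smul, hζsum]
      congr 1
      exact Measure.map_id
    refine le_trans (iInf₂_le γ ⟨h1, h2⟩) ?_
    -- the weight function
    set A : ℝ → ℝ≥0∞ := fun t => ENNReal.ofReal |t| ^ p with hAdef
    have hAm : Measurable A := (measurable_abs.ennreal_ofReal).pow_const p
    set C : ℝ≥0∞ := (2 : ℝ≥0∞) ^ (p - 1) with hCdef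
    have hCeq : ENNReal.ofReal ((2 : ℝ) ^ (p - 1)) = C := by
      rw [hCdef, ← ENNReal.ofReal_rpow_of_pos two_pos, ENNReal.ofReal_ofNat]
    -- pointwise bound
    have hpt : ∀ x y : ℝ, ENNReal.ofReal (|x - y| ^ p) ≤ C * (A x + A y) := by
      intro x y
      rw [← ENNReal.ofReal_rpow_of_nonneg (abs_nonneg _) hp0.le]
      calc ENNReal.ofReal |x - y| ^ p
          ≤ (ENNReal.ofReal |x| + ENNReal.ofReal |y|) ^ p := by
            refine ENNReal.rpow_le_rpow ?_ hp0.le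
            rw [← ENNReal.ofReal_add (abs_nonneg _) (abs_nonneg _)]
            exact ENNReal.ofReal_le_ofReal (abs_sub _ _)
        _ ≤ C * (ENNReal.ofReal |x| ^ p + ENNReal.ofReal |y| ^ p) :=
            ENNReal.rpow_add_le_mul_rpow_add_rpow _ _ hp
        _ = C * (A x + A y) := rfl
    -- diagonal part costs zero
    have hdiag0 : ∫⁻ q, ENNReal.ofReal (|q.1 - q.2| ^ p) ∂(ν.map fun x => (x, x)) = 0 := by
      rw [lintegral_map hcostm hdiagm]
      simp [Real.zero_rpow hp0.ne']
    -- integrals of A against the marginal pieces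
    have hfst : ∫⁻ q, A q.1 ∂(μp.prod μn) = m * ∫⁻ t, A t ∂μp := by
      rw [← lintegral_map hAm measurable_fst, Measure.map_fst_prod, hmm,
        lintegral_smul_measure, smul_eq_mul]
    have hsnd : ∫⁻ q, A q.2 ∂(μp.prod μn) = m * ∫⁻ t, A t ∂μn := by
      rw [← lintegral_map hAm measurable_snd, Measure.map_snd_prod, ← hmdef,
        lintegral_smul_measure, smul_eq_mul]
    -- total
    set S : ℝ≥0∞ := (∫⁻ t, A t ∂μp) + ∫⁻ t, A t ∂μn with hSdef
    have hprod_le : ∫⁻ q, ENNReal.ofReal (|q.1 - q.2| ^ p) ∂(μp.prod μn) ≤ C * (m * S) := by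
      calc ∫⁻ q, ENNReal.ofReal (|q.1 - q.2| ^ p) ∂(μp.prod μn)
          ≤ ∫⁻ q : ℝ × ℝ, C * (A q.1 + A q.2) ∂(μp.prod μn) :=
            lintegral_mono fun q => hpt q.1 q.2
        _ = C * ((∫⁻ q, A q.1 ∂(μp.prod μn)) + ∫⁻ q, A q.2 ∂(μp.prod μn)) := by
            rw [lintegral_const_mul (f := fun q : ℝ × ℝ => A q.1 + A q.2) C
              ((hAm.comp measurable_fst).add (hAm.comp measurable_snd))]
            congr 1
            exact lintegral_add_left (f := fun q : ℝ × ℝ => A q.1)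
              (hAm.comp measurable_fst) _
        _ = C * (m * S) := by rw [hfst, hsnd, hSdef, mul_add m, mul_add C]
    -- identify S with the weighted TV integral
    have hS : S = ∫⁻ t, ENNReal.ofReal (|t| ^ p * |f t - g t|) := by
      rw [hSdef, hμpdef, hμndef, lintegral_withDensity_eq_lintegral_mul _ hfpm hAm,
        lintegral_withDensity_eq_lintegral_mul _ hfmm hAm,
        ← lintegral_add_left (f := fp * A) (hfpm.mul hAm) (fm * A)]
      congr 1
      funext t
      have hsum : fp t + fm t = ENNReal.ofReal |f t - g t| := by
        rcases le_total (f t) (g t) with hle | hle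
        · have h1 : F t ≤ G t := ENNReal.ofReal_le_ofReal hle
          rw [hfpdef, hfmdef]
          simp only [tsub_eq_zero_of_le h1, zero_add]
          rw [hGdef, hFdef, abs_sub_comm, abs_of_nonneg (by linarith),
            ENNReal.ofReal_sub _ (hf0 t)]
        · have h1 : G t ≤ F t := ENNReal.ofReal_le_ofReal hle
          rw [hfpdef, hfmdef]
          simp only [tsub_eq_zero_of_le h1, add_zero]
          rw [hFdef, hGdef, abs_of_nonneg (by linarith),
            ENNReal.ofReal_sub _ (hg0 t)]
      calc (fp * A) t + (fm * A) t = (fp t + fm t) * A t := by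
            simp [Pi.mul_apply, add_mul]
        _ = ENNReal.ofReal |f t - g t| * ENNReal.ofReal (|t| ^ p) := by
            rw [hsum, hAdef, ← ENNReal.ofReal_rpow_of_nonneg (abs_nonneg _) hp0.le]
        _ = ENNReal.ofReal (|t| ^ p * |f t - g t|) := by
            rw [← ENNReal.ofReal_mul (abs_nonneg _), mul_comm]
    -- put it together
    calc ∫⁻ q, ENNReal.ofReal (|q.1 - q.2| ^ p) ∂γ
        = (∫⁻ q, ENNReal.ofReal (|q.1 - q.2| ^ p) ∂(ν.map fun x => (x, x)))
          + m⁻¹ * ∫⁻ q, ENNReal.ofReal (|q.1 - q.2| ^ p) ∂(μp.prod μn) := by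
          rw [hγdef, lintegral_add_measure, lintegral_smul_measure, smul_eq_mul]
      _ ≤ 0 + m⁻¹ * (C * (m * S)) := by
          exact add_le_add (le_of_eq hdiag0) (mul_le_mul_right hprod_le _)
      _ = C * S := by
          rw [zero_add, mul_comm C, mul_assoc, ← mul_assoc m⁻¹,
            ENNReal.inv_mul_cancel hm0 hm_ne_top, one_mul, mul_comm]
      _ = ENNReal.ofReal ((2 : ℝ) ^ (p - 1))
          * ∫⁻ t, ENNReal.ofReal (|t| ^ p * |f t - g t|) := by rw [hCeq, hS]
end
end
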